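/- arXiv:2404.12057 — 3 statements merged into one kernel-verified Lean document; each statement's English description precedes it below -/
import Mathlib

section
/- Gluing lemma for separated systems: let C be an L-separated, m-gluable system of chains on a set with walls (S,P). Suppose c = {…,h₋₂,h₋₁} and c' = {k₁,k₂,…} are elements of C, each indexed along its chain order, such that (as subsets of S) h₋₁⁺ ∩ k_j⁻ ≠ ∅ and h₋₁⁺ ∩ k_j⁺ ≠ ∅ for all j, and h_i⁻ ∩ k₁⁻ ≠ ∅ and h_i⁺ ∩ k₁⁻ ≠ ∅ for all i. Then there is a subset b ⊆ {h₋ₘ₋₁,…,h₋₁, k₁,…,k_{L+m+1}} of cardinality at most L+m+1 such that (c ∪ c') ∖ b ∈ C. -/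
open Set

namespace WallDuality

variable {S : Type*}

/-- A wall on `S`, recorded as the unordered pair of its two complementary halfspaces. -/
def IsWall (h : Set (Set S)) : Prop := ∃ A : Set S, h = {A, Aᶜ}

/-- A set with walls: every element of `P` is a wall on `S`. -/
def IsWallSystem (P : Set (Set (Set S))) : Prop := ∀ h ∈ P, IsWall h

variable (P : Set (Set (Set S)))

/-- An ultrafilter on `P`: a consistent choice of a halfspace of each wall of `P`. -/
def IsUltra (x : ↥P → Set S) : Prop :=
  (∀ w : ↥P, x w ∈ w.1) ∧
    ∀ (w₁ w₂ : ↥P) (A B : Set S), A ∈ w₁.1 → B ∈ w₂.1 → A ⊆ B → x w₁ = A → x w₂ = B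

/-- The set `X̂` of all ultrafilters on `P`. -/
def hatX : Set (↥P → Set S) := {x | IsUltra P x}

/-- The principal ultrafilter of a point `s`: each wall is oriented towards `s`. -/
def principalUF (s : S) : ↥P → Set S := fun w => ⋃₀ {A | A ∈ w.1 ∧ s ∈ A}

/-- The pseudodistance associated with a collection `C` of subsets of `P`:
the supremum of the cardinalities of members of `C` all of whose walls separate
the two orientations. -/
noncomputable def wallDist (C : Set (Set ↥P)) (x y : ↥P → Set S) : ℕ∞ :=
  ⨆ c ∈ {c | c ∈ C ∧ ∀ w ∈ c, x w ≠ y w}, c.encard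

/-- A dualisable system on `(S, P)`. -/
structure IsDualisable (C : Set (Set ↥P)) : Prop where
  singleton_mem : ∀ w : ↥P, ({w} : Set ↥P) ∈ C
  subset_mem : ∀ c ∈ C, ∀ c' ⊆ c, c' ∈ C
  bounded : ∀ s t : S, ∃ M : ℕ, ∀ c ∈ C,
    (∀ w ∈ c, principalUF P s w ≠ principalUF P t w) → c.encard ≤ (M : ℕ∞)

/-- The dual space `X_C`: ultrafilters at finite distance from all principal ones. -/
def dualSpace (C : Set (Set ↥P)) : Set (↥P → Set S) :=
  {x | IsUltra P x ∧ ∀ s : S, wallDist P C x (principalUF P s) ≠ ⊤}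

/-- The majority-vote median of three orientations. -/
def medianUF (x y z : ↥P → Set S) : ↥P → Set S :=
  fun w => x w ∩ y w ∪ x w ∩ z w ∪ y w ∩ z w

/-- A `P`-convex subset of `X̂`: an intersection of halfspaces. -/
def IsPConvex (C' : Set (↥P → Set S)) : Prop :=
  ∃ (Q : Set ↥P) (σ : ↥P → Set S), (∀ w ∈ Q, σ w ∈ w.1) ∧
    C' = {v | IsUltra P v ∧ ∀ w ∈ Q, v w = σ w}

open scoped Classical in
/-- The gate of `z` to a set `C'` of orientations: reverse the orientation of exactly
those walls that separate `z` from `C'`. -/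
noncomputable def gateUF (C' : Set (↥P → Set S)) (z : ↥P → Set S) : ↥P → Set S :=
  fun w => if ∃ v ∈ C', v w = z w then z w else (z w)ᶜ

/-- `A` is gated in `Y` (with respect to the majority-vote median). -/
def IsGatedIn (Y A : Set (↥P → Set S)) : Prop :=
  ∀ x ∈ Y, ∃! g, g ∈ A ∧ ∀ a ∈ A, medianUF P a g x = g

/-- `σ` is a nested choice of halfspaces witnessing that `c` is a chain. -/
def IsChainOrder (σ : ↥P → Set S) (c : Set ↥P) : Prop :=
  (∀ w ∈ c, σ w ∈ w.1) ∧ ∀ w₁ ∈ c, ∀ w₂ ∈ c, σ w₁ ⊆ σ w₂ ∨ σ w₂ ⊆ σ w₁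

/-- A chain of walls. -/
def IsWallChain (c : Set ↥P) : Prop := ∃ σ, IsChainOrder P σ c

/-- A system of chains: a dualisable system all of whose members are chains. -/
def IsChainSystem (C : Set (Set ↥P)) : Prop :=
  IsDualisable P C ∧ ∀ c ∈ C, IsWallChain P c

/-- `C` is `m`-gluable: two members of `C`, one entirely preceding the other and with
union a chain, can be glued after removing at most `m` consecutive walls taken from
the last `m` walls of the first and the first `m` walls of the second. -/
def IsGluable (C : Set (Set ↥P)) (m : ℕ) : Prop :=
  ∀ c₁ ∈ C, ∀ c₂ ∈ C, ∀ σ : ↥P → Set S,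
    IsChainOrder P σ (c₁ ∪ c₂) → Disjoint c₁ c₂ →
    (∀ w₁ ∈ c₁, ∀ w₂ ∈ c₂, σ w₁ ⊆ σ w₂) →
    ∃ b ⊆ c₁ ∪ c₂,
      b.encard ≤ (m : ℕ∞) ∧
      (∀ w ∈ b ∩ c₁, {w' | w' ∈ c₁ ∧ σ w ⊂ σ w'}.encard < (m : ℕ∞)) ∧
      (∀ w ∈ b ∩ c₂, {w' | w' ∈ c₂ ∧ σ w' ⊂ σ w}.encard < (m : ℕ∞)) ∧
      (∀ w₁ ∈ b, ∀ w₂ ∈ b, ∀ w ∈ c₁ ∪ c₂, σ w₁ ⊆ σ w → σ w ⊆ σ w₂ → w ∈ b) ∧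
      (c₁ ∪ c₂) \ b ∈ C

/-- The ball of radius `r` about `x` in `X_C`. -/
def ballX (C : Set (Set ↥P)) (x : ↥P → Set S) (r : ℕ∞) : Set (↥P → Set S) :=
  {z | z ∈ dualSpace P C ∧ wallDist P C x z ≤ r}

/-- The normal wall path: the gate of `y` to the ball of radius `r` about `x`. -/
noncomputable def nwp (C : Set (Set ↥P)) (x y : ↥P → Set S) (r : ℕ) : ↥P → Set S :=
  gateUF P (ballX P C x (r : ℕ∞)) y

/-- Two walls cross: all four quarterspaces are nonempty. -/
def Crosses (w₁ w₂ : ↥P) : Prop := ∀ A ∈ w₁.1, ∀ B ∈ w₂.1, (A ∩ B).Nonempty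

/-- `C` is `L`-separated. -/
def IsSeparated (C : Set (Set ↥P)) (L : ℕ) : Prop :=
  ∀ w₁ w₂ : ↥P, w₁ ≠ w₂ → ({w₁, w₂} : Set ↥P) ∈ C →
    ∀ c ∈ C, (∀ w ∈ c, Crosses P w w₁ ∧ Crosses P w w₂) → c.encard ≤ (L : ℕ∞)

end WallDuality

namespace WallDuality

/-- **Gluing lemma for separated systems** (Lemma 5.4): if `C` is an `L`-separated,
`m`-gluable system of chains, `c` has a maximal wall `h₋₁` whose `+`-side meets
both halfspaces of every wall of `c'`, and `c'` has a minimal wall `k₁` whose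
`-`-side meets both halfspaces of every wall of `c`, then one obtains a member of
`C` from `c ∪ c'` by removing at most `L + m + 1` walls, taken from the last
`m + 1` walls of `c` and the first `L + m + 1` walls of `c'`. -/
theorem gluing_lemma
    {S : Type*} (P : Set (Set (Set S))) (C : Set (Set ↥P))
    (hP : IsWallSystem P) (L m : ℕ)
    (hC : IsChainSystem P C) (hsep : IsSeparated P C L) (hglu : IsGluable P C m)
    (c c' : Set ↥P) (hc : c ∈ C) (hc' : c' ∈ C)
    (σ τ : ↥P → Set S) (hσ : IsChainOrder P σ c) (hτ : IsChainOrder P τ c')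
    (hmax : ↥P) (hmax_mem : hmax ∈ c) (hmax_top : ∀ w ∈ c, σ w ⊆ σ hmax)
    (kmin : ↥P) (kmin_mem : kmin ∈ c') (kmin_bot : ∀ w ∈ c', τ kmin ⊆ τ w)
    (hmeet₁ : ∀ k ∈ c',
      ((σ hmax)ᶜ ∩ τ k).Nonempty ∧ ((σ hmax)ᶜ ∩ (τ k)ᶜ).Nonempty)
    (hmeet₂ : ∀ h ∈ c,
      (σ h ∩ τ kmin).Nonempty ∧ ((σ h)ᶜ ∩ τ kmin).Nonempty) :
    ∃ b ⊆ c ∪ c',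
      b.encard ≤ ((L + m + 1 : ℕ) : ℕ∞) ∧
      (∀ w ∈ b ∩ c, {w' | w' ∈ c ∧ σ w ⊂ σ w'}.encard ≤ (m : ℕ∞)) ∧
      (∀ w ∈ b ∩ c', {w' | w' ∈ c' ∧ τ w' ⊂ τ w}.encard ≤ ((L + m : ℕ) : ℕ∞)) ∧
      (c ∪ c') \ b ∈ C := by
  classical
  obtain ⟨hσmem, hσcomp⟩ := hσ
  obtain ⟨hτmem, hτcomp⟩ := hτ
  -- every wall equals the unordered pair of any of its halfspaces and its complement
  have wall_pair : ∀ (w : ↥P) (A : Set S), A ∈ w.1 → w.1 = {A, Aᶜ} := by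
    intro w A hA
    obtain ⟨B, hB⟩ := hP w.1 w.2
    rw [hB] at hA ⊢
    simp only [Set.mem_insert_iff, Set.mem_singleton_iff] at hA
    rcases hA with rfl | rfl
    · rfl
    · rw [compl_compl]; exact Set.pair_comm _ _
  -- c and c' are disjoint
  have hcc' : ∀ w, w ∈ c → w ∈ c' → False := by
    intro w hwc hwc'
    have h1 : τ w ∈ w.1 := hτmem w hwc'
    rw [wall_pair w (σ w) (hσmem w hwc)] at h1
    simp only [Set.mem_insert_iff, Set.mem_singleton_iff] at h1
    rcases h1 with h1 | h1
    · obtain ⟨x, hx1, hx2⟩ := (hmeet₁ w hwc').1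
      rw [h1] at hx2
      exact hx1 (hmax_top w hwc hx2)
    · obtain ⟨x, hx1, hx2⟩ := (hmeet₂ w hwc).1
      have hx3 := kmin_bot w hwc' hx2
      rw [h1] at hx3
      exact hx3 hx1
  -- the walls of c' crossing a given wall of c
  set D : ↥P → Set ↥P := fun h => {k | k ∈ c' ∧ ¬ σ h ⊆ τ k} with hDdef
  have hDsub : ∀ h, D h ⊆ c' := fun h k hk => hk.1
  have hDmono : ∀ h₁ h₂ : ↥P, σ h₁ ⊆ σ h₂ → D h₁ ⊆ D h₂ := by
    intro h₁ h₂ hss k hk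
    exact ⟨hk.1, fun hsub => hk.2 (hss.trans hsub)⟩
  -- separation bounds D h for non-maximal h
  have hDL : ∀ h ∈ c, h ≠ hmax → (D h).encard ≤ (L : ℕ∞) := by
    intro h hh hne
    have hpairc : ({h, hmax} : Set ↥P) ⊆ c := by
      intro w hw
      simp only [Set.mem_insert_iff, Set.mem_singleton_iff] at hw
      rcases hw with rfl | rfl
      · exact hh
      · exact hmax_mem
    refine hsep h hmax hne (hC.1.subset_mem c hc _ hpairc) (D h)
      (hC.1.subset_mem c' hc' (D h) (hDsub h)) ?_
    intro k hk
    obtain ⟨hkc', hns⟩ := hk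
    obtain ⟨x3, hx3σ, hx3τ⟩ := Set.not_subset.mp hns
    have n1 : (τ k ∩ σ h).Nonempty := by
      obtain ⟨x, hx1, hx2⟩ := (hmeet₂ h hh).1
      exact ⟨x, kmin_bot k hkc' hx2, hx1⟩
    have n2 : (τ k ∩ (σ h)ᶜ).Nonempty := by
      obtain ⟨x, hx1, hx2⟩ := (hmeet₂ h hh).2
      exact ⟨x, kmin_bot k hkc' hx2, hx1⟩
    have n3 : ((τ k)ᶜ ∩ σ h).Nonempty := ⟨x3, hx3τ, hx3σ⟩
    have n4 : ((τ k)ᶜ ∩ (σ h)ᶜ).Nonempty := by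
      obtain ⟨x, hx1, hx2⟩ := (hmeet₁ k hkc').2
      exact ⟨x, hx2, fun hxσ => hx1 (hmax_top h hh hxσ)⟩
    have m1 : (τ k ∩ σ hmax).Nonempty := by
      obtain ⟨x, hx1, hx2⟩ := n1
      exact ⟨x, hx1, hmax_top h hh hx2⟩
    have m2 : (τ k ∩ (σ hmax)ᶜ).Nonempty := by
      obtain ⟨x, hx1, hx2⟩ := (hmeet₁ k hkc').1
      exact ⟨x, hx2, hx1⟩
    have m3 : ((τ k)ᶜ ∩ σ hmax).Nonempty := ⟨x3, hx3τ, hmax_top h hh hx3σ⟩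
    have m4 : ((τ k)ᶜ ∩ (σ hmax)ᶜ).Nonempty := by
      obtain ⟨x, hx1, hx2⟩ := (hmeet₁ k hkc').2
      exact ⟨x, hx2, hx1⟩
    have hkp := wall_pair k (τ k) (hτmem k hkc')
    have hhp := wall_pair h (σ h) (hσmem h hh)
    have hmp := wall_pair hmax (σ hmax) (hσmem hmax hmax_mem)
    constructor
    · intro A hA B hB
      rw [hkp] at hA; rw [hhp] at hB
      simp only [Set.mem_insert_iff, Set.mem_singleton_iff] at hA hB
      rcases hA with rfl | rfl <;> rcases hB with rfl | rfl
      · exact n1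
      · exact n2
      · exact n3
      · exact n4
    · intro A hA B hB
      rw [hkp] at hA; rw [hmp] at hB
      simp only [Set.mem_insert_iff, Set.mem_singleton_iff] at hA hB
      rcases hA with rfl | rfl <;> rcases hB with rfl | rfl
      · exact m1
      · exact m2
      · exact m3
      · exact m4
  -- the union of all these crossing sets
  set Dinf : Set ↥P := {k | ∃ h, h ∈ c ∧ h ≠ hmax ∧ k ∈ D h} with hDinfdef
  have hDinfsub : Dinf ⊆ c' := by
    rintro k ⟨h, _, _, hkD⟩; exact hkD.1
  have hDinfL : Dinf.encard ≤ (L : ℕ∞) := by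
    by_contra hcon
    push_neg at hcon
    have h1 : (L : ℕ∞) + 1 ≤ Dinf.encard := (ENat.add_one_le_iff (by simp)).mpr hcon
    obtain ⟨F, hFsub, hFcard⟩ := Set.exists_subset_encard_eq h1
    have hFfin : F.Finite := by
      apply Set.finite_of_encard_eq_coe (k := L + 1)
      rw [hFcard]; push_cast; ring
    have key : ∀ (G : Set ↥P), G.Finite → G ⊆ Dinf →
        (G = ∅ ∨ ∃ h, h ∈ c ∧ h ≠ hmax ∧ G ⊆ D h) := by
      intro G hG
      refine Set.Finite.induction_on G hG ?_ ?_
      · intro _; exact Or.inl rfl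
      · intro a s ha hs ih hsub
        right
        have hainf : a ∈ Dinf := hsub (Set.mem_insert a s)
        obtain ⟨h₁, hh₁c, hh₁ne, haD⟩ := hainf
        rcases ih (fun x hx => hsub (Set.mem_insert_of_mem a hx)) with rfl | ⟨h₂, hh₂c, hh₂ne, hsD⟩
        · refine ⟨h₁, hh₁c, hh₁ne, ?_⟩
          intro x hx
          rcases hx with rfl | hx
          · exact haD
          · exact absurd hx (Set.notMem_empty x)
        · rcases hσcomp h₁ hh₁c h₂ hh₂c with hss | hss
          · exact ⟨h₂, hh₂c, hh₂ne, Set.insert_subset (hDmono h₁ h₂ hss haD) hsD⟩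
          · exact ⟨h₁, hh₁c, hh₁ne,
              Set.insert_subset haD (hsD.trans (hDmono h₂ h₁ hss))⟩
    rcases key F hFfin hFsub with rfl | ⟨h, hhc, hhne, hFD⟩
    · rw [Set.encard_empty] at hFcard
      exact (by simp : ((L : ℕ∞) + 1) ≠ 0) hFcard.symm
    · have h2 : F.encard ≤ (L : ℕ∞) := le_trans (Set.encard_mono hFD) (hDL h hhc hhne)
      rw [hFcard] at h2
      exact lt_irrefl _ ((ENat.add_one_le_iff (by simp)).mp h2)
  -- the two pieces to be glued
  set c₁ : Set ↥P := c \ {hmax} with hc₁def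
  set c₂ : Set ↥P := c' \ Dinf with hc₂def
  have hc₁c : c₁ ⊆ c := Set.diff_subset
  have hc₂c' : c₂ ⊆ c' := Set.diff_subset
  have hc₁C : c₁ ∈ C := hC.1.subset_mem c hc c₁ hc₁c
  have hc₂C : c₂ ∈ C := hC.1.subset_mem c' hc' c₂ hc₂c'
  set σ' : ↥P → Set S := fun w => if w ∈ c₁ then σ w else τ w with hσ'def
  have hσ'c₁ : ∀ w ∈ c₁, σ' w = σ w := fun w hw => if_pos hw
  have hσ'c₂ : ∀ w ∈ c₂, σ' w = τ w := by
    intro w hw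
    have hnot : w ∉ c₁ := fun h => hcc' w (hc₁c h) (hc₂c' hw)
    exact if_neg hnot
  have hkey : ∀ w₁ ∈ c₁, ∀ w₂ ∈ c₂, σ w₁ ⊆ τ w₂ := by
    intro w₁ hw₁ w₂ hw₂
    by_contra hns
    exact hw₂.2 ⟨w₁, hw₁.1, fun he => hw₁.2 (by rw [he]; exact rfl),
      ⟨hc₂c' hw₂, hns⟩⟩
  have hchain : IsChainOrder P σ' (c₁ ∪ c₂) := by
    constructor
    · intro w hw
      rcases hw with hw | hw
      · rw [hσ'c₁ w hw]; exact hσmem w (hc₁c hw)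
      · rw [hσ'c₂ w hw]; exact hτmem w (hc₂c' hw)
    · intro w₁ hw₁ w₂ hw₂
      rcases hw₁ with hw₁ | hw₁ <;> rcases hw₂ with hw₂ | hw₂
      · rw [hσ'c₁ w₁ hw₁, hσ'c₁ w₂ hw₂]; exact hσcomp w₁ (hc₁c hw₁) w₂ (hc₁c hw₂)
      · rw [hσ'c₁ w₁ hw₁, hσ'c₂ w₂ hw₂]; exact Or.inl (hkey w₁ hw₁ w₂ hw₂)
      · rw [hσ'c₂ w₁ hw₁, hσ'c₁ w₂ hw₂]; exact Or.inr (hkey w₂ hw₂ w₁ hw₁)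
      · rw [hσ'c₂ w₁ hw₁, hσ'c₂ w₂ hw₂]; exact hτcomp w₁ (hc₂c' hw₁) w₂ (hc₂c' hw₂)
  have hdisj12 : Disjoint c₁ c₂ := by
    rw [Set.disjoint_left]
    intro w hw₁ hw₂
    exact hcc' w (hc₁c hw₁) (hc₂c' hw₂)
  obtain ⟨b₁, hb₁sub, hb₁card, hpos1, hpos2, -, hmemC⟩ :=
    hglu c₁ hc₁C c₂ hc₂C σ' hchain hdisj12
      (fun w₁ hw₁ w₂ hw₂ => by
        rw [hσ'c₁ w₁ hw₁, hσ'c₂ w₂ hw₂]; exact hkey w₁ hw₁ w₂ hw₂)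
  -- assemble the removal set
  refine ⟨insert hmax Dinf ∪ b₁, ?_, ?_, ?_, ?_, ?_⟩
  · intro w hw
    rcases hw with hw | hw
    · rcases Set.mem_insert_iff.mp hw with rfl | hw
      · exact Or.inl hmax_mem
      · exact Or.inr (hDinfsub hw)
    · rcases hb₁sub hw with h | h
      · exact Or.inl (hc₁c h)
      · exact Or.inr (hc₂c' h)
  · calc (insert hmax Dinf ∪ b₁).encard
        ≤ (insert hmax Dinf).encard + b₁.encard := Set.encard_union_le _ _
      _ ≤ (Dinf.encard + 1) + (m : ℕ∞) := add_le_add (Set.encard_insert_le _ _) hb₁card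
      _ ≤ ((L : ℕ∞) + 1) + (m : ℕ∞) := by
          exact add_le_add (add_le_add_left hDinfL 1) le_rfl
      _ = ((L + m + 1 : ℕ) : ℕ∞) := by push_cast; ring
  · intro w hw
    obtain ⟨hwb, hwc⟩ := hw
    rcases hwb with hwb | hwb
    · rcases Set.mem_insert_iff.mp hwb with hwe | hwb
      · have hempty : {w' | w' ∈ c ∧ σ w ⊂ σ w'} = ∅ := by
          ext w'
          simp only [Set.mem_setOf_eq, Set.mem_empty_iff_false, iff_false, not_and]
          intro hw' hss
          rw [hwe] at hss
          exact hss.not_subset (hmax_top w' hw')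
        rw [hempty, Set.encard_empty]
        exact zero_le
      · exact (hcc' w hwc (hDinfsub hwb)).elim
    · have hwc₁ : w ∈ c₁ := by
        rcases hb₁sub hwb with h | h
        · exact h
        · exact (hcc' w hwc (hc₂c' h)).elim
      have hlt := hpos1 w ⟨hwb, hwc₁⟩
      have hsubset : {w' | w' ∈ c ∧ σ w ⊂ σ w'} ⊆
          insert hmax {w' | w' ∈ c₁ ∧ σ' w ⊂ σ' w'} := by
        rintro w' ⟨hw', hss⟩
        by_cases he : w' = hmax
        · rw [he]; exact Set.mem_insert _ _
        · have hw'c₁ : w' ∈ c₁ := ⟨hw', fun hx => he hx⟩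
          refine Set.mem_insert_of_mem _ ⟨hw'c₁, ?_⟩
          rw [hσ'c₁ w hwc₁, hσ'c₁ w' hw'c₁]
          exact hss
      calc {w' | w' ∈ c ∧ σ w ⊂ σ w'}.encard
          ≤ (insert hmax {w' | w' ∈ c₁ ∧ σ' w ⊂ σ' w'}).encard := Set.encard_mono hsubset
        _ ≤ {w' | w' ∈ c₁ ∧ σ' w ⊂ σ' w'}.encard + 1 := Set.encard_insert_le _ _
        _ ≤ (m : ℕ∞) := (ENat.add_one_le_iff (ne_top_of_lt hlt)).mpr hlt
  · intro w hw
    obtain ⟨hwb, hwc'⟩ := hw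
    rcases hwb with hwb | hwb
    · rcases Set.mem_insert_iff.mp hwb with hwe | hwb
      · exact (hcc' w (hwe ▸ hmax_mem) hwc').elim
      · obtain ⟨h, hhc, hhne, hkD⟩ := hwb
        have hsub2 : {w' | w' ∈ c' ∧ τ w' ⊂ τ w} ⊆ D h := by
          rintro w' ⟨hw', hss⟩
          exact ⟨hw', fun hsub => hkD.2 (hsub.trans hss.subset)⟩
        calc {w' | w' ∈ c' ∧ τ w' ⊂ τ w}.encard
            ≤ (D h).encard := Set.encard_mono hsub2
          _ ≤ (L : ℕ∞) := hDL h hhc hhne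
          _ ≤ ((L + m : ℕ) : ℕ∞) := by
              push_cast
              exact le_add_of_nonneg_right zero_le
    · have hwc₂ : w ∈ c₂ := by
        rcases hb₁sub hwb with h | h
        · exact (hcc' w (hc₁c h) hwc').elim
        · exact h
      have hlt := hpos2 w ⟨hwb, hwc₂⟩
      have hsubset : {w' | w' ∈ c' ∧ τ w' ⊂ τ w} ⊆
          {w' | w' ∈ c₂ ∧ σ' w' ⊂ σ' w} ∪ Dinf := by
        rintro w' ⟨hw', hss⟩
        by_cases hd : w' ∈ Dinf
        · exact Or.inr hd
        · have hw'c₂ : w' ∈ c₂ := ⟨hw', hd⟩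
          refine Or.inl ⟨hw'c₂, ?_⟩
          rw [hσ'c₂ w' hw'c₂, hσ'c₂ w hwc₂]
          exact hss
      calc {w' | w' ∈ c' ∧ τ w' ⊂ τ w}.encard
          ≤ ({w' | w' ∈ c₂ ∧ σ' w' ⊂ σ' w} ∪ Dinf).encard := Set.encard_mono hsubset
        _ ≤ {w' | w' ∈ c₂ ∧ σ' w' ⊂ σ' w}.encard + Dinf.encard := Set.encard_union_le _ _
        _ ≤ (m : ℕ∞) + (L : ℕ∞) := add_le_add hlt.le hDinfL
        _ = ((L + m : ℕ) : ℕ∞) := by push_cast; ring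
  · have hsplit : (c ∪ c') \ insert hmax Dinf = c₁ ∪ c₂ := by
      ext w
      constructor
      · rintro ⟨hw | hw, hnb⟩
        · exact Or.inl ⟨hw, fun he => hnb (Set.mem_insert_iff.mpr (Or.inl he))⟩
        · exact Or.inr ⟨hw, fun hd => hnb (Set.mem_insert_of_mem _ hd)⟩
      · rintro (⟨hw, hne⟩ | ⟨hw, hnd⟩)
        · refine ⟨Or.inl hw, fun hb => ?_⟩
          rcases Set.mem_insert_iff.mp hb with rfl | hb
          · exact hne rfl
          · exact hcc' w hw (hDinfsub hb)
        · refine ⟨Or.inr hw, fun hb => ?_⟩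
          rcases Set.mem_insert_iff.mp hb with rfl | hb
          · exact hcc' w hmax_mem hw
          · exact hnd hb
    have heq : (c ∪ c') \ (insert hmax Dinf ∪ b₁) = (c₁ ∪ c₂) \ b₁ := by
      rw [← Set.diff_diff, hsplit]
    rw [heq]
    exact hmemC

end WallDuality
end

section
/- Hyperbolicity of separated duals: let C be an L-separated, m-gluable system of chains on a set with walls (S,P). Then the metric dist_C on X_C is four-point hyperbolic with constant 22(L+m+1): for all x₁,x₂,x₃,x₄ ∈ X_C, dist_C(x₁,x₂) + dist_C(x₃,x₄) ≤ 22(L+m+1) + max{dist_C(x₁,x₃) + dist_C(x₂,x₄), dist_C(x₁,x₄) + dist_C(x₂,x₃)}. -/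
open Set

namespace WallDuality

section ProofAux

variable {S : Type*} {P : Set (Set (Set S))} {C : Set (Set ↥P)} {L m : ℕ}

lemma wall_pair (hP : IsWallSystem P) (w : ↥P) {H : Set S} (hH : H ∈ w.1) :
    w.1 = {H, Hᶜ} := by
  obtain ⟨A, hA⟩ := hP w.1 w.2
  rw [hA] at hH ⊢
  simp only [Set.mem_insert_iff, Set.mem_singleton_iff] at hH
  rcases hH with rfl | rfl
  · rfl
  · rw [compl_compl, Set.pair_comm]

lemma compl_mem (hP : IsWallSystem P) (w : ↥P) {H : Set S} (hH : H ∈ w.1) :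
    Hᶜ ∈ w.1 := by
  rw [wall_pair hP w hH]; simp

lemma value_cases (hP : IsWallSystem P) {x : ↥P → Set S} (hx : IsUltra P x) (w : ↥P)
    {H : Set S} (hH : H ∈ w.1) : x w = H ∨ x w = Hᶜ := by
  have h := hx.1 w
  rw [wall_pair hP w hH] at h
  simpa using h

lemma mem_wall_cases (hP : IsWallSystem P) (w : ↥P) {H K : Set S}
    (hH : H ∈ w.1) (hK : K ∈ w.1) : K = H ∨ K = Hᶜ := by
  have h := hK
  rw [wall_pair hP w hH] at h
  simpa using h

lemma compl_ne (hS : Nonempty S) (H : Set S) : Hᶜ ≠ H := by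
  intro h
  obtain ⟨s⟩ := hS
  by_cases hs : s ∈ H
  · have hs' := hs
    rw [← h] at hs'
    exact hs' hs
  · have hs' : s ∈ Hᶜ := hs
    rw [h] at hs'
    exact hs hs'

lemma le_wallDist {x y : ↥P → Set S} {c : Set ↥P} (hc : c ∈ C)
    (h : ∀ w ∈ c, x w ≠ y w) : c.encard ≤ wallDist P C x y :=
  le_iSup₂ (f := fun c (_ : c ∈ {c | c ∈ C ∧ ∀ w ∈ c, x w ≠ y w}) => c.encard) c ⟨hc, h⟩

lemma wallDist_le {x y : ↥P → Set S} {M : ℕ∞}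
    (h : ∀ c ∈ C, (∀ w ∈ c, x w ≠ y w) → c.encard ≤ M) : wallDist P C x y ≤ M :=
  iSup₂_le fun c hc => h c hc.1 hc.2

lemma wallDist_comm (x y : ↥P → Set S) : wallDist P C x y = wallDist P C y x :=
  le_antisymm (wallDist_le fun c hc hsep => le_wallDist hc fun w hw => (hsep w hw).symm)
    (wallDist_le fun c hc hsep => le_wallDist hc fun w hw => (hsep w hw).symm)

lemma wallDist_triangle (hC : IsChainSystem P C) (x y z : ↥P → Set S) :
    wallDist P C x z ≤ wallDist P C x y + wallDist P C y z := by
  refine wallDist_le fun c hc hsep => ?_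
  have h1 : {w ∈ c | x w ≠ y w} ∈ C := hC.1.subset_mem c hc _ (Set.sep_subset _ _)
  have h2 : {w ∈ c | x w = y w} ∈ C := hC.1.subset_mem c hc _ (Set.sep_subset _ _)
  have hcu : c = {w ∈ c | x w ≠ y w} ∪ {w ∈ c | x w = y w} := by
    ext w
    simp only [Set.mem_union, Set.mem_sep_iff]
    by_cases h : x w = y w <;> tauto
  have hle : c.encard ≤ {w ∈ c | x w ≠ y w}.encard + {w ∈ c | x w = y w}.encard := by
    calc c.encard = ({w ∈ c | x w ≠ y w} ∪ {w ∈ c | x w = y w}).encard := by rw [← hcu]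
      _ ≤ _ := Set.encard_union_le _ _
  refine hle.trans (add_le_add (le_wallDist h1 fun w hw => hw.2)
    (le_wallDist h2 fun w hw => fun h' => hsep w hw.1 (hw.2.trans h')))

lemma chainOrder_compl (hP : IsWallSystem P) {σ : ↥P → Set S} {c : Set ↥P}
    (h : IsChainOrder P σ c) : IsChainOrder P (fun w => (σ w)ᶜ) c :=
  ⟨fun w hw => compl_mem hP w (h.1 w hw),
   fun a ha b hb => (h.2 a ha b hb).symm.imp compl_subset_compl.mpr compl_subset_compl.mpr⟩

lemma chainOrder_mono {σ : ↥P → Set S} {c c' : Set ↥P} (hsub : c' ⊆ c)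
    (h : IsChainOrder P σ c) : IsChainOrder P σ c' :=
  ⟨fun w hw => h.1 w (hsub hw), fun a ha b hb => h.2 a (hsub ha) b (hsub hb)⟩

lemma exists_orientation (hS : Nonempty S) (hP : IsWallSystem P)
    {x y : ↥P → Set S} (hx : IsUltra P x) (hy : IsUltra P y)
    {c : Set ↥P} {σ₀ : ↥P → Set S} (hσ₀ : IsChainOrder P σ₀ c)
    (hsep : ∀ w ∈ c, x w ≠ y w) :
    ∃ σ : ↥P → Set S, IsChainOrder P σ c ∧ ∀ w ∈ c, x w = (σ w)ᶜ ∧ y w = σ w := by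
  have hdich : (∀ w ∈ c, y w = σ₀ w) ∨ (∀ w ∈ c, x w = σ₀ w) := by
    by_contra h
    push_neg at h
    obtain ⟨⟨w₁, hw₁, hyw₁⟩, ⟨w₂, hw₂, hxw₂⟩⟩ := h
    have hy₁ : y w₁ = (σ₀ w₁)ᶜ := (value_cases hP hy w₁ (hσ₀.1 w₁ hw₁)).resolve_left hyw₁
    have hx₁ : x w₁ = σ₀ w₁ := by
      rcases value_cases hP hx w₁ (hσ₀.1 w₁ hw₁) with h' | h'
      · exact h'
      · exact absurd (h'.trans hy₁.symm) (hsep w₁ hw₁)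
    have hx₂ : x w₂ = (σ₀ w₂)ᶜ := (value_cases hP hx w₂ (hσ₀.1 w₂ hw₂)).resolve_left hxw₂
    have hy₂ : y w₂ = σ₀ w₂ := by
      rcases value_cases hP hy w₂ (hσ₀.1 w₂ hw₂) with h' | h'
      · exact h'
      · exact absurd (hx₂.trans h'.symm) (hsep w₂ hw₂)
    rcases hσ₀.2 w₁ hw₁ w₂ hw₂ with hsub | hsub
    · exact hxw₂ (hx.2 w₁ w₂ _ _ (hσ₀.1 w₁ hw₁) (hσ₀.1 w₂ hw₂) hsub hx₁)
    · exact hyw₁ (hy.2 w₂ w₁ _ _ (hσ₀.1 w₂ hw₂) (hσ₀.1 w₁ hw₁) hsub hy₂)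
  rcases hdich with h | h
  · refine ⟨σ₀, hσ₀, fun w hw => ⟨?_, h w hw⟩⟩
    rcases value_cases hP hx w (hσ₀.1 w hw) with h' | h'
    · exact absurd (h'.trans (h w hw).symm) (hsep w hw)
    · exact h'
  · refine ⟨fun w => (σ₀ w)ᶜ, chainOrder_compl hP hσ₀, fun w hw => ⟨?_, ?_⟩⟩
    · rw [compl_compl]; exact h w hw
    · rcases value_cases hP hy w (hσ₀.1 w hw) with h' | h'
      · exact absurd ((h w hw).trans h'.symm) (hsep w hw)
      · exact h'

end ProofAux

section Glue

variable {S : Type*} {P : Set (Set (Set S))} {C : Set (Set ↥P)} {L m : ℕ}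

lemma glue_bound (hS : Nonempty S) (hP : IsWallSystem P)
    (hC : IsChainSystem P C) (hsepC : IsSeparated P C L) (hglu : IsGluable P C m)
    {x y z : ↥P → Set S} (hx : IsUltra P x) (hy : IsUltra P y) (hz : IsUltra P z)
    {c c' : Set ↥P} (hc : c ∈ C) (hc' : c' ∈ C) (hfin' : c'.Finite)
    {σ τ : ↥P → Set S} (hσ : IsChainOrder P σ c) (hτ : IsChainOrder P τ c')
    (hxc : ∀ u ∈ c, x u = (σ u)ᶜ) (hyc : ∀ u ∈ c, y u = σ u) (hzc : ∀ u ∈ c, z u = σ u)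
    (hxc' : ∀ v ∈ c', x v = τ v) (hyc' : ∀ v ∈ c', y v = τ v)
    (hzc' : ∀ v ∈ c', z v = (τ v)ᶜ) :
    c.encard + c'.encard ≤ wallDist P C x z + ((L : ℕ∞) + (m : ℕ∞) + 1) := by
  classical
  -- `c` and `c'` are disjoint
  have hdisj : ∀ w, w ∈ c → w ∈ c' → False := by
    intro w hw hw'
    have h1 := hzc w hw
    have h2 := hzc' w hw'
    have h3 : σ w = τ w := (hyc w hw).symm.trans (hyc' w hw')
    exact compl_ne hS (σ w)
      ((h1.symm.trans (h2.trans (congrArg (·ᶜ) h3).symm))).symm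
  -- non-crossing pairs are coherently nested
  have hkey : ∀ u ∈ c, ∀ v ∈ c', ¬ Crosses P u v → (σ u)ᶜ ⊆ τ v := by
    intro u hu v hv hcr
    unfold Crosses at hcr
    push_neg at hcr
    obtain ⟨A, hA, B, hB, hAB⟩ := hcr
    have hdisjAB : ∀ s, s ∈ A → s ∈ B → False := fun s h1 h2 =>
      (Set.eq_empty_iff_forall_notMem.mp hAB s) ⟨h1, h2⟩
    have hu1 := hσ.1 u hu
    have hv1 := hτ.1 v hv
    rcases mem_wall_cases hP u hu1 hA with rfl | rfl <;>
      rcases mem_wall_cases hP v hv1 hB with rfl | rfl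
    · -- σ u ∩ τ v = ∅ : contradict via y
      have hsub : σ u ⊆ (τ v)ᶜ := fun s hs ht => hdisjAB s hs ht
      have := hy.2 u v (σ u) ((τ v)ᶜ) hu1 (compl_mem hP v hv1) hsub (hyc u hu)
      exact absurd ((hyc' v hv).symm.trans this).symm (compl_ne hS (τ v))
    · -- σ u ∩ (τ v)ᶜ = ∅ : σ u ⊆ τ v, contradict via z
      have hsub : σ u ⊆ τ v := fun s hs => by
        by_contra h
        exact hdisjAB s hs h
      have := hz.2 u v (σ u) (τ v) hu1 hv1 hsub (hzc u hu)
      exact absurd ((hzc' v hv).symm.trans this) (compl_ne hS (τ v))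
    · -- (σ u)ᶜ ∩ τ v = ∅ : τ v ⊆ σ u, contradict via x
      have hsub : τ v ⊆ σ u := fun s hs => by
        by_contra h
        exact hdisjAB s h hs
      have := hx.2 v u (τ v) (σ u) hv1 hu1 hsub (hxc' v hv)
      exact absurd ((hxc u hu).symm.trans this) (compl_ne hS (σ u))
    · -- (σ u)ᶜ ∩ (τ v)ᶜ = ∅ : the good case
      intro s hs
      by_contra h
      exact hdisjAB s hs h
  have hnc_of : ∀ u ∈ c, ∀ v ∈ c', (σ u)ᶜ ⊆ τ v → ¬ Crosses P u v := by
    intro u hu v hv hsub hcross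
    obtain ⟨s, hs1, hs2⟩ := hcross ((σ u)ᶜ) (compl_mem hP u (hσ.1 u hu)) ((τ v)ᶜ)
      (compl_mem hP v (hτ.1 v hv))
    exact hs2 (hsub hs1)
  -- trimming: remove at most L+1 walls to kill all crossings
  have htrim : ∃ Rc Rc' : Set ↥P, Rc ⊆ c ∧ Rc' ⊆ c' ∧
      Rc.encard + Rc'.encard ≤ (L : ℕ∞) + 1 ∧
      ∀ u ∈ c \ Rc, ∀ v ∈ c' \ Rc', ¬ Crosses P u v := by
    by_cases hCC : ∃ v ∈ c', ∃ u ∈ c, Crosses P u v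
    · set CC : Set ↥P := {v | v ∈ c' ∧ ∃ u ∈ c, Crosses P u v} with hCCdef
      have hCCsub : CC ⊆ c' := fun v hv => hv.1
      have hCCfin : CC.Finite := hfin'.subset hCCsub
      have hCCne : CC.Nonempty := by
        obtain ⟨v, hv, hu⟩ := hCC
        exact ⟨v, hv, hu⟩
      obtain ⟨vm, hvmCC, hvmmin⟩ := Set.Finite.exists_minimalFor τ CC hCCfin hCCne
      have hvmle : ∀ v ∈ CC, τ vm ⊆ τ v := by
        intro v hv
        rcases hτ.2 vm (hCCsub hvmCC) v (hCCsub hv) with h | h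
        · exact h
        · exact hvmmin hv h
      by_cases hCC2 : ∃ v ∈ CC, v ≠ vm
      · set CC2 : Set ↥P := {v | v ∈ CC ∧ v ≠ vm} with hCC2def
        have hCC2ne : CC2.Nonempty := by
          obtain ⟨v, h1, h2⟩ := hCC2
          exact ⟨v, h1, h2⟩
        obtain ⟨vs, hvsCC2, hvsmin⟩ := Set.Finite.exists_minimalFor τ CC2
          (hCCfin.subset fun v hv => hv.1) hCC2ne
        have hvsle : ∀ v ∈ CC2, τ vs ⊆ τ v := by
          intro v hv
          rcases hτ.2 vs (hCCsub hvsCC2.1) v (hCCsub hv.1) with h | h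
          · exact h
          · exact hvsmin hv h
        set Rc : Set ↥P := {u | u ∈ c ∧ ∃ v ∈ CC2, Crosses P u v} with hRcdef
        have hRsub : Rc ⊆ c := fun u hu => hu.1
        have hRcC : Rc ∈ C := hC.1.subset_mem c hc Rc hRsub
        have hRcross : ∀ u ∈ Rc, Crosses P u vm ∧ Crosses P u vs := by
          intro u hu
          obtain ⟨huc, v, hvCC2, hcross⟩ := hu
          constructor
          · by_contra hncr
            exact hnc_of u huc v (hCCsub hvCC2.1)
              ((hkey u huc vm (hCCsub hvmCC) hncr).trans (hvmle v hvCC2.1)) hcross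
          · by_contra hncr
            exact hnc_of u huc v (hCCsub hvCC2.1)
              ((hkey u huc vs (hCCsub hvsCC2.1) hncr).trans (hvsle v hvCC2)) hcross
        have hRcard : Rc.encard ≤ (L : ℕ∞) := by
          refine hsepC vm vs (fun h => hvsCC2.2 h.symm) ?_ Rc hRcC fun w hw => hRcross w hw
          exact hC.1.subset_mem c' hc' _
            (Set.insert_subset_iff.mpr ⟨hCCsub hvmCC,
              Set.singleton_subset_iff.mpr (hCCsub hvsCC2.1)⟩)
        refine ⟨Rc, {vm}, hRsub, Set.singleton_subset_iff.mpr (hCCsub hvmCC), ?_, ?_⟩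
        · rw [Set.encard_singleton]
          exact add_le_add_left hRcard 1
        · intro u hu v hv hcross
          have hvCC : v ∈ CC := ⟨hv.1, u, hu.1, hcross⟩
          have hvne : v ≠ vm := fun h => hv.2 (Set.mem_singleton_iff.mpr h)
          exact hu.2 ⟨hu.1, v, ⟨hvCC, hvne⟩, hcross⟩
      · refine ⟨∅, {vm}, Set.empty_subset _,
          Set.singleton_subset_iff.mpr (hCCsub hvmCC), ?_, ?_⟩
        · rw [Set.encard_empty, Set.encard_singleton, zero_add]
          exact le_add_self
        · intro u hu v hv hcross
          push_neg at hCC2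
          exact hv.2 (Set.mem_singleton_iff.mpr (hCC2 v ⟨hv.1, u, hu.1, hcross⟩))
    · refine ⟨∅, ∅, Set.empty_subset _, Set.empty_subset _, by simp, ?_⟩
      intro u hu v hv hcross
      push_neg at hCC
      exact hCC v hv.1 u hu.1 hcross
  obtain ⟨Rc, Rc', hRsub, hR'sub, hRcard, hnocross⟩ := htrim
  set c₁ := c \ Rc with hc₁def
  set c₂ := c' \ Rc' with hc₂def
  have hc₁C : c₁ ∈ C := hC.1.subset_mem c hc c₁ Set.diff_subset
  have hc₂C : c₂ ∈ C := hC.1.subset_mem c' hc' c₂ Set.diff_subset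
  set ρ : ↥P → Set S := fun w => if w ∈ c then (σ w)ᶜ else τ w with hρdef
  have hρc : ∀ w ∈ c₁, ρ w = (σ w)ᶜ := fun w hw => if_pos hw.1
  have hρc' : ∀ w ∈ c₂, ρ w = τ w := fun w hw => if_neg (fun h => hdisj w h hw.1)
  have hprec : ∀ w₁ ∈ c₁, ∀ w₂ ∈ c₂, ρ w₁ ⊆ ρ w₂ := by
    intro w₁ h1 w₂ h2
    rw [hρc w₁ h1, hρc' w₂ h2]
    exact hkey w₁ h1.1 w₂ h2.1 (hnocross w₁ h1 w₂ h2)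
  have hchain : IsChainOrder P ρ (c₁ ∪ c₂) := by
    constructor
    · intro w hw
      rcases hw with hw | hw
      · rw [hρc w hw]; exact compl_mem hP w (hσ.1 w hw.1)
      · rw [hρc' w hw]; exact hτ.1 w hw.1
    · intro a ha b hb
      rcases ha with ha | ha <;> rcases hb with hb | hb
      · rw [hρc a ha, hρc b hb]
        exact (hσ.2 a ha.1 b hb.1).symm.imp compl_subset_compl.mpr compl_subset_compl.mpr
      · exact Or.inl (hprec a ha b hb)
      · exact Or.inr (hprec b hb a ha)
      · rw [hρc' a ha, hρc' b hb]; exact hτ.2 a ha.1 b hb.1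
  have hdisj12 : Disjoint c₁ c₂ := by
    rw [Set.disjoint_left]
    intro w h1 h2
    exact hdisj w h1.1 h2.1
  obtain ⟨b, hbsub, hbcard, -, -, -, hbC⟩ := hglu c₁ hc₁C c₂ hc₂C ρ hchain hdisj12 hprec
  have hesep : ∀ w ∈ (c₁ ∪ c₂) \ b, x w ≠ z w := by
    intro w hw
    rcases hw.1 with hw' | hw'
    · rw [hxc w hw'.1, hzc w hw'.1]; exact compl_ne hS (σ w)
    · rw [hxc' w hw'.1, hzc' w hw'.1]; exact fun h => compl_ne hS (τ w) h.symm
  have hle := le_wallDist hbC hesep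
  have e1 : c₁.encard + Rc.encard = c.encard := Set.encard_diff_add_encard_of_subset hRsub
  have e2 : c₂.encard + Rc'.encard = c'.encard := Set.encard_diff_add_encard_of_subset hR'sub
  have e3 : ((c₁ ∪ c₂) \ b).encard + b.encard = c₁.encard + c₂.encard := by
    rw [Set.encard_diff_add_encard_of_subset hbsub, Set.encard_union_eq hdisj12]
  calc c.encard + c'.encard
      = (c₁.encard + c₂.encard) + (Rc.encard + Rc'.encard) := by
        rw [← e1, ← e2]; ring
    _ = (((c₁ ∪ c₂) \ b).encard + b.encard) + (Rc.encard + Rc'.encard) := by rw [e3]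
    _ ≤ (wallDist P C x z + (m : ℕ∞)) + ((L : ℕ∞) + 1) :=
        add_le_add (add_le_add hle hbcard) hRcard
    _ = wallDist P C x z + ((L : ℕ∞) + (m : ℕ∞) + 1) := by ring

end Glue

/-- **Hyperbolicity of separated duals** (Proposition 5.7): if `C` is an
`L`-separated, `m`-gluable system of chains, then `dist_C` on `X_C` is four-point
hyperbolic with constant `22 (L + m + 1)`. -/
theorem separated_dual_four_point_hyperbolic
    {S : Type*} (P : Set (Set (Set S))) (C : Set (Set ↥P))
    (hP : IsWallSystem P) (L m : ℕ)
    (hC : IsChainSystem P C) (hsep : IsSeparated P C L) (hglu : IsGluable P C m) :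
    ∀ x₁ ∈ dualSpace P C, ∀ x₂ ∈ dualSpace P C,
    ∀ x₃ ∈ dualSpace P C, ∀ x₄ ∈ dualSpace P C,
      wallDist P C x₁ x₂ + wallDist P C x₃ x₄ ≤
        ((22 * (L + m + 1) : ℕ) : ℕ∞) +
          max (wallDist P C x₁ x₃ + wallDist P C x₂ x₄)
            (wallDist P C x₁ x₄ + wallDist P C x₂ x₃) := by
  intro x₁ hx₁ x₂ hx₂ x₃ hx₃ x₄ hx₄
  obtain ⟨hu₁, -⟩ := hx₁
  obtain ⟨hu₂, -⟩ := hx₂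
  obtain ⟨hu₃, -⟩ := hx₃
  obtain ⟨hu₄, -⟩ := hx₄
  by_cases hS : Nonempty S
  swap
  · -- `S` is empty : all distances vanish
    have hzero : ∀ x y : ↥P → Set S, wallDist P C x y = 0 := by
      intro x y
      refine le_antisymm (wallDist_le fun c hc hsepc => ?_) zero_le
      have hce : c = ∅ := by
        rw [Set.eq_empty_iff_forall_notMem]
        intro w hw
        refine hsepc w hw ?_
        ext s
        exact absurd ⟨s⟩ hS
      simp [hce]
    rw [hzero x₁ x₂, hzero x₃ x₄]
    simpa using zero_le
  have tri : ∀ a b c : ↥P → Set S,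
      wallDist P C a c ≤ wallDist P C a b + wallDist P C b c := wallDist_triangle hC
  -- trivial cases where a cross distance is infinite
  by_cases h13 : wallDist P C x₁ x₃ = ⊤
  · rw [h13]; simp
  by_cases h24 : wallDist P C x₂ x₄ = ⊤
  · rw [h24]; simp
  by_cases h14 : wallDist P C x₁ x₄ = ⊤
  · rw [h14]; simp
  by_cases h23 : wallDist P C x₂ x₃ = ⊤
  · rw [h23]; simp
  -- the two LHS distances are finite
  have h12 : wallDist P C x₁ x₂ ≠ ⊤ := by
    intro h
    have := tri x₁ x₃ x₂
    rw [h, wallDist_comm x₃ x₂] at this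
    rcases (WithTop.add_eq_top).mp (top_le_iff.mp this) with h' | h'
    · exact h13 h'
    · exact h23 h'
  have h34 : wallDist P C x₃ x₄ ≠ ⊤ := by
    intro h
    have := tri x₃ x₁ x₄
    rw [h, wallDist_comm x₃ x₁] at this
    rcases (WithTop.add_eq_top).mp (top_le_iff.mp this) with h' | h'
    · exact h13 h'
    · exact h14 h'
  -- cases where a LHS distance is zero
  by_cases h12z : wallDist P C x₁ x₂ = 0
  · have hA : wallDist P C x₃ x₄ ≤ wallDist P C x₁ x₄ + wallDist P C x₂ x₃ := by
      calc wallDist P C x₃ x₄ ≤ wallDist P C x₃ x₁ + wallDist P C x₁ x₄ := tri _ _ _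
        _ ≤ (wallDist P C x₃ x₂ + wallDist P C x₂ x₁) + wallDist P C x₁ x₄ :=
            add_le_add_left (tri _ _ _) _
        _ = wallDist P C x₁ x₄ + wallDist P C x₂ x₃ := by
            rw [wallDist_comm x₃ x₂, wallDist_comm x₂ x₁, h12z, add_zero, add_comm]
    rw [h12z, zero_add]
    exact hA.trans ((le_max_right _ _).trans le_add_self)
  by_cases h34z : wallDist P C x₃ x₄ = 0
  · have hA : wallDist P C x₁ x₂ ≤ wallDist P C x₁ x₃ + wallDist P C x₂ x₄ := by
      calc wallDist P C x₁ x₂ ≤ wallDist P C x₁ x₃ + wallDist P C x₃ x₂ := tri _ _ _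
        _ ≤ wallDist P C x₁ x₃ + (wallDist P C x₃ x₄ + wallDist P C x₄ x₂) :=
            add_le_add le_rfl (tri _ _ _)
        _ = wallDist P C x₁ x₃ + wallDist P C x₂ x₄ := by
            rw [h34z, zero_add, wallDist_comm x₄ x₂]
    rw [h34z, add_zero]
    exact hA.trans ((le_max_left _ _).trans le_add_self)
  -- attainment of the two LHS distances
  have hattain : ∀ x y : ↥P → Set S, wallDist P C x y ≠ 0 → wallDist P C x y ≠ ⊤ →
      ∃ γ ∈ C, (∀ w ∈ γ, x w ≠ y w) ∧ γ.encard = wallDist P C x y := by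
    intro x y hne htop
    by_contra h
    push_neg at h
    obtain ⟨k, hk⟩ : ∃ k : ℕ, wallDist P C x y = (k : ℕ∞) := ⟨_, (ENat.coe_toNat htop).symm⟩
    rw [hk] at hne
    have hk0 : k ≠ 0 := by exact_mod_cast hne
    have hlt : wallDist P C x y ≤ ((k - 1 : ℕ) : ℕ∞) := by
      refine wallDist_le fun γ hγ hsepγ => ?_
      have h1 : γ.encard ≤ wallDist P C x y := le_wallDist hγ hsepγ
      have h3 : γ.encard < wallDist P C x y := lt_of_le_of_ne h1 (h γ hγ hsepγ)
      rw [hk] at h3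
      obtain ⟨j, hj⟩ : ∃ j : ℕ, γ.encard = (j : ℕ∞) :=
        ⟨_, (ENat.coe_toNat (ne_top_of_lt h3)).symm⟩
      rw [hj] at h3 ⊢
      have hjk : j < k := by exact_mod_cast h3
      exact Nat.cast_le.mpr (by omega)
    rw [hk] at hlt
    have hfin : k ≤ k - 1 := by exact_mod_cast hlt
    omega
  obtain ⟨γ, hγC, hsep12, hγcard⟩ := hattain x₁ x₂ h12z h12
  obtain ⟨γ', hγ'C, hsep34, hγ'card⟩ := hattain x₃ x₄ h34z h34
  have hγfin : γ.Finite := by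
    rw [← Set.encard_lt_top_iff, hγcard]
    exact lt_top_iff_ne_top.mpr h12
  have hγ'fin : γ'.Finite := by
    rw [← Set.encard_lt_top_iff, hγ'card]
    exact lt_top_iff_ne_top.mpr h34
  -- orient the two chains
  obtain ⟨σ₀, hσ₀⟩ := hC.2 γ hγC
  obtain ⟨σ, hσ, hσval⟩ := exists_orientation hS hP hu₁ hu₂ hσ₀ hsep12
  obtain ⟨τ₀, hτ₀⟩ := hC.2 γ' hγ'C
  obtain ⟨τ, hτ, hτval⟩ := exists_orientation hS hP hu₃ hu₄ hτ₀ hsep34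
  -- the four half-chains
  set U3 : Set ↥P := {u | u ∈ γ ∧ x₃ u = σ u} with hU3def
  set U4 : Set ↥P := {u | u ∈ γ ∧ x₄ u = σ u} with hU4def
  set V1 : Set ↥P := {v | v ∈ γ' ∧ x₁ v = τ v} with hV1def
  set V2 : Set ↥P := {v | v ∈ γ' ∧ x₂ v = τ v} with hV2def
  have hU3sub : U3 ⊆ γ := fun u hu => hu.1
  have hU4sub : U4 ⊆ γ := fun u hu => hu.1
  have hV1sub : V1 ⊆ γ' := fun v hv => hv.1
  have hV2sub : V2 ⊆ γ' := fun v hv => hv.1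
  have hcomp3 : ∀ u ∈ γ, u ∉ U3 → x₃ u = (σ u)ᶜ := by
    intro u hu hnu
    rcases value_cases hP hu₃ u (hσ.1 u hu) with h | h
    · exact absurd ⟨hu, h⟩ hnu
    · exact h
  have hcomp4 : ∀ u ∈ γ, u ∉ U4 → x₄ u = (σ u)ᶜ := by
    intro u hu hnu
    rcases value_cases hP hu₄ u (hσ.1 u hu) with h | h
    · exact absurd ⟨hu, h⟩ hnu
    · exact h
  have hcomp1' : ∀ v ∈ γ', v ∉ V1 → x₁ v = (τ v)ᶜ := by
    intro v hv hnv
    rcases value_cases hP hu₁ v (hτ.1 v hv) with h | h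
    · exact absurd ⟨hv, h⟩ hnv
    · exact h
  have hcomp2' : ∀ v ∈ γ', v ∉ V2 → x₂ v = (τ v)ᶜ := by
    intro v hv hnv
    rcases value_cases hP hu₂ v (hτ.1 v hv) with h | h
    · exact absurd ⟨hv, h⟩ hnv
    · exact h
  -- nesting
  have hnest : U3 ⊆ U4 ∨ U4 ⊆ U3 := by
    by_contra h
    obtain ⟨h1, h2⟩ := not_or.mp h
    obtain ⟨u, hu3, hu4⟩ := Set.not_subset.mp h1
    obtain ⟨u', hu'4, hu'3⟩ := Set.not_subset.mp h2
    rcases hσ.2 u hu3.1 u' hu'4.1 with hss | hss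
    · exact hu'3 ⟨hu'4.1, hu₃.2 u u' _ _ (hσ.1 u hu3.1) (hσ.1 u' hu'4.1) hss hu3.2⟩
    · exact hu4 ⟨hu3.1, hu₄.2 u' u _ _ (hσ.1 u' hu'4.1) (hσ.1 u hu3.1) hss hu'4.2⟩
  have hnest' : V1 ⊆ V2 ∨ V2 ⊆ V1 := by
    by_contra h
    obtain ⟨h1, h2⟩ := not_or.mp h
    obtain ⟨v, hv1, hv2⟩ := Set.not_subset.mp h1
    obtain ⟨v', hv'2, hv'1⟩ := Set.not_subset.mp h2
    rcases hτ.2 v hv1.1 v' hv'2.1 with hss | hss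
    · exact hv'1 ⟨hv'2.1, hu₁.2 v v' _ _ (hτ.1 v hv1.1) (hτ.1 v' hv'2.1) hss hv1.2⟩
    · exact hv2 ⟨hv1.1, hu₂.2 v' v _ _ (hτ.1 v' hv'2.1) (hτ.1 v hv1.1) hss hv'2.2⟩
  -- the eight gluing estimates
  have hI := glue_bound hS hP hC hsep hglu hu₁ hu₂ hu₃
    (hC.1.subset_mem γ hγC U3 hU3sub)
    (hC.1.subset_mem γ' hγ'C (V1 ∩ V2) (fun v hv => hv.1.1))
    (hγ'fin.subset (fun v hv => hv.1.1))
    (chainOrder_mono hU3sub hσ) (chainOrder_mono (fun v hv => hv.1.1) hτ)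
    (fun u hu => (hσval u hu.1).1)
    (fun u hu => (hσval u hu.1).2)
    (fun u hu => hu.2)
    (fun v hv => hv.1.2)
    (fun v hv => hv.2.2)
    (fun v hv => (hτval v hv.1.1).1)
  have hII := glue_bound hS hP hC hsep hglu hu₁ hu₄ hu₃
    (hC.1.subset_mem γ hγC (U3 ∩ U4) (fun u hu => hu.1.1))
    (hC.1.subset_mem γ' hγ'C V1 hV1sub)
    (hγ'fin.subset hV1sub)
    (chainOrder_mono (fun u hu => hu.1.1) hσ) (chainOrder_mono hV1sub hτ)
    (fun u hu => (hσval u hu.1.1).1)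
    (fun u hu => hu.2.2)
    (fun u hu => hu.1.2)
    (fun v hv => hv.2)
    (fun v hv => (hτval v hv.1).2)
    (fun v hv => (hτval v hv.1).1)
  have hIII := glue_bound hS hP hC hsep hglu hu₄ hu₁ hu₂
    (hC.1.subset_mem γ' hγ'C (γ' \ (V1 ∪ V2)) Set.diff_subset)
    (hC.1.subset_mem γ hγC (γ \ U4) Set.diff_subset)
    (hγfin.subset Set.diff_subset)
    (chainOrder_compl hP (chainOrder_mono Set.diff_subset hτ))
    (chainOrder_compl hP (chainOrder_mono Set.diff_subset hσ))
    (fun v hv => by simpa using (hτval v hv.1).2)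
    (fun v hv => hcomp1' v hv.1 (fun h => hv.2 (Or.inl h)))
    (fun v hv => hcomp2' v hv.1 (fun h => hv.2 (Or.inr h)))
    (fun u hu => hcomp4 u hu.1 hu.2)
    (fun u hu => (hσval u hu.1).1)
    (fun u hu => by simpa using (hσval u hu.1).2)
  have hIV := glue_bound hS hP hC hsep hglu hu₂ hu₃ hu₄
    (hC.1.subset_mem γ hγC (γ \ (U3 ∪ U4)) Set.diff_subset)
    (hC.1.subset_mem γ' hγ'C (γ' \ V2) Set.diff_subset)
    (hγ'fin.subset Set.diff_subset)
    (chainOrder_compl hP (chainOrder_mono Set.diff_subset hσ))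
    (chainOrder_compl hP (chainOrder_mono Set.diff_subset hτ))
    (fun u hu => by simpa using (hσval u hu.1).2)
    (fun u hu => hcomp3 u hu.1 (fun h => hu.2 (Or.inl h)))
    (fun u hu => hcomp4 u hu.1 (fun h => hu.2 (Or.inr h)))
    (fun v hv => hcomp2' v hv.1 hv.2)
    (fun v hv => (hτval v hv.1).1)
    (fun v hv => by simpa using (hτval v hv.1).2)
  have hV := glue_bound hS hP hC hsep hglu hu₁ hu₂ hu₄
    (hC.1.subset_mem γ hγC U4 hU4sub)
    (hC.1.subset_mem γ' hγ'C (γ' \ (V1 ∪ V2)) Set.diff_subset)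
    (hγ'fin.subset Set.diff_subset)
    (chainOrder_mono hU4sub hσ)
    (chainOrder_compl hP (chainOrder_mono Set.diff_subset hτ))
    (fun u hu => (hσval u hu.1).1)
    (fun u hu => (hσval u hu.1).2)
    (fun u hu => hu.2)
    (fun v hv => hcomp1' v hv.1 (fun h => hv.2 (Or.inl h)))
    (fun v hv => hcomp2' v hv.1 (fun h => hv.2 (Or.inr h)))
    (fun v hv => by simpa using (hτval v hv.1).2)
  have hVI := glue_bound hS hP hC hsep hglu hu₁ hu₃ hu₄
    (hC.1.subset_mem γ hγC (U3 ∩ U4) (fun u hu => hu.1.1))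
    (hC.1.subset_mem γ' hγ'C (γ' \ V1) Set.diff_subset)
    (hγ'fin.subset Set.diff_subset)
    (chainOrder_mono (fun u hu => hu.1.1) hσ)
    (chainOrder_compl hP (chainOrder_mono Set.diff_subset hτ))
    (fun u hu => (hσval u hu.1.1).1)
    (fun u hu => hu.1.2)
    (fun u hu => hu.2.2)
    (fun v hv => hcomp1' v hv.1 hv.2)
    (fun v hv => (hτval v hv.1).1)
    (fun v hv => by simpa using (hτval v hv.1).2)
  have hVII := glue_bound hS hP hC hsep hglu hu₃ hu₁ hu₂
    (hC.1.subset_mem γ' hγ'C (V1 ∩ V2) (fun v hv => hv.1.1))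
    (hC.1.subset_mem γ hγC (γ \ U3) Set.diff_subset)
    (hγfin.subset Set.diff_subset)
    (chainOrder_mono (fun v hv => hv.1.1) hτ)
    (chainOrder_compl hP (chainOrder_mono Set.diff_subset hσ))
    (fun v hv => (hτval v hv.1.1).1)
    (fun v hv => hv.1.2)
    (fun v hv => hv.2.2)
    (fun u hu => hcomp3 u hu.1 hu.2)
    (fun u hu => (hσval u hu.1).1)
    (fun u hu => by simpa using (hσval u hu.1).2)
  have hVIII := glue_bound hS hP hC hsep hglu hu₂ hu₄ hu₃
    (hC.1.subset_mem γ hγC (γ \ (U3 ∪ U4)) Set.diff_subset)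
    (hC.1.subset_mem γ' hγ'C V2 hV2sub)
    (hγ'fin.subset hV2sub)
    (chainOrder_compl hP (chainOrder_mono Set.diff_subset hσ))
    (chainOrder_mono hV2sub hτ)
    (fun u hu => by simpa using (hσval u hu.1).2)
    (fun u hu => hcomp4 u hu.1 (fun h => hu.2 (Or.inr h)))
    (fun u hu => hcomp3 u hu.1 (fun h => hu.2 (Or.inl h)))
    (fun v hv => hv.2)
    (fun v hv => (hτval v hv.1).2)
    (fun v hv => (hτval v hv.1).1)
  -- switch to natural numbers
  rw [wallDist_comm x₄ x₂] at hIII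
  rw [wallDist_comm x₃ x₂] at hVII
  obtain ⟨k13, hk13⟩ : ∃ k : ℕ, wallDist P C x₁ x₃ = (k : ℕ∞) :=
    ⟨_, (ENat.coe_toNat h13).symm⟩
  obtain ⟨k24, hk24⟩ : ∃ k : ℕ, wallDist P C x₂ x₄ = (k : ℕ∞) :=
    ⟨_, (ENat.coe_toNat h24).symm⟩
  obtain ⟨k14, hk14⟩ : ∃ k : ℕ, wallDist P C x₁ x₄ = (k : ℕ∞) :=
    ⟨_, (ENat.coe_toNat h14).symm⟩
  obtain ⟨k23, hk23⟩ : ∃ k : ℕ, wallDist P C x₂ x₃ = (k : ℕ∞) :=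
    ⟨_, (ENat.coe_toNat h23).symm⟩
  have fU3 : U3.Finite := hγfin.subset hU3sub
  have fU4 : U4.Finite := hγfin.subset hU4sub
  have fV1 : V1.Finite := hγ'fin.subset hV1sub
  have fV2 : V2.Finite := hγ'fin.subset hV2sub
  have fIU : (U3 ∩ U4).Finite := hγfin.subset (fun u hu => hu.1.1)
  have fIV : (V1 ∩ V2).Finite := hγ'fin.subset (fun v hv => hv.1.1)
  have nat_of : ∀ {A B : Set ↥P} {d : ℕ∞} {k : ℕ}, A.Finite → B.Finite → d = (k : ℕ∞) →
      A.encard + B.encard ≤ d + ((L : ℕ∞) + (m : ℕ∞) + 1) →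
      A.ncard + B.ncard ≤ k + (L + m + 1) := by
    intro A B d k hA hB hd h
    rw [hd, ← hA.cast_ncard_eq, ← hB.cast_ncard_eq] at h
    exact_mod_cast h
  have nI := nat_of fU3 fIV hk13 hI
  have nII := nat_of fIU fV1 hk13 hII
  have nIII := nat_of (hγ'fin.subset Set.diff_subset) (hγfin.subset Set.diff_subset) hk24 hIII
  have nIV := nat_of (hγfin.subset Set.diff_subset) (hγ'fin.subset Set.diff_subset) hk24 hIV
  have nV := nat_of fU4 (hγ'fin.subset Set.diff_subset) hk14 hV
  have nVI := nat_of fIU (hγ'fin.subset Set.diff_subset) hk14 hVI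
  have nVII := nat_of fIV (hγfin.subset Set.diff_subset) hk23 hVII
  have nVIII := nat_of (hγfin.subset Set.diff_subset) fV2 hk23 hVIII
  have hdcard : ∀ (A T : Set ↥P), A ⊆ T → T.Finite →
      (T \ A).ncard + A.ncard = T.ncard := by
    intro A T hA hT
    have h := Set.encard_diff_add_encard_of_subset hA
    rw [← (hT.subset Set.diff_subset).cast_ncard_eq, ← (hT.subset hA).cast_ncard_eq,
      ← hT.cast_ncard_eq] at h
    exact_mod_cast h
  have d1 := hdcard U3 γ hU3sub hγfin
  have d2 := hdcard U4 γ hU4sub hγfin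
  have d3 := hdcard (U3 ∪ U4) γ (Set.union_subset hU3sub hU4sub) hγfin
  have d4 := hdcard V1 γ' hV1sub hγ'fin
  have d5 := hdcard V2 γ' hV2sub hγ'fin
  have d6 := hdcard (V1 ∪ V2) γ' (Set.union_subset hV1sub hV2sub) hγ'fin
  have iu1 : (U3 ∩ U4).ncard + (U3 ∪ U4).ncard = U3.ncard + U4.ncard :=
    Set.ncard_inter_add_ncard_union U3 U4 fU3 fU4
  have iu2 : (V1 ∩ V2).ncard + (V1 ∪ V2).ncard = V1.ncard + V2.ncard :=
    Set.ncard_inter_add_ncard_union V1 V2 fV1 fV2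
  have hmin1 : (U3 ∩ U4).ncard = U3.ncard ∨ (U3 ∩ U4).ncard = U4.ncard := by
    rcases hnest with h | h
    · exact Or.inl (congrArg Set.ncard (Set.inter_eq_left.mpr h))
    · exact Or.inr (congrArg Set.ncard (Set.inter_eq_right.mpr h))
  have hmin2 : (V1 ∩ V2).ncard = V1.ncard ∨ (V1 ∩ V2).ncard = V2.ncard := by
    rcases hnest' with h | h
    · exact Or.inl (congrArg Set.ncard (Set.inter_eq_left.mpr h))
    · exact Or.inr (congrArg Set.ncard (Set.inter_eq_right.mpr h))
  have hn12 : wallDist P C x₁ x₂ = (γ.ncard : ℕ∞) := by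
    rw [← hγcard, hγfin.cast_ncard_eq]
  have hn34 : wallDist P C x₃ x₄ = (γ'.ncard : ℕ∞) := by
    rw [← hγ'card, hγ'fin.cast_ncard_eq]
  rw [hn12, hn34, hk13, hk24, hk14, hk23]
  have key : γ.ncard + γ'.ncard ≤ 22 * (L + m + 1) + (k13 + k24) ∨
      γ.ncard + γ'.ncard ≤ 22 * (L + m + 1) + (k14 + k23) := by omega
  rcases key with hkk | hkk
  · calc (γ.ncard : ℕ∞) + (γ'.ncard : ℕ∞)
        = ((γ.ncard + γ'.ncard : ℕ) : ℕ∞) := by push_cast; ring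
      _ ≤ ((22 * (L + m + 1) + (k13 + k24) : ℕ) : ℕ∞) := by exact_mod_cast hkk
      _ = ((22 * (L + m + 1) : ℕ) : ℕ∞) + ((k13 : ℕ∞) + (k24 : ℕ∞)) := by push_cast; ring
      _ ≤ _ := add_le_add_right (le_max_left _ _) _
  · calc (γ.ncard : ℕ∞) + (γ'.ncard : ℕ∞)
        = ((γ.ncard + γ'.ncard : ℕ) : ℕ∞) := by push_cast; ring
      _ ≤ ((22 * (L + m + 1) + (k14 + k23) : ℕ) : ℕ∞) := by exact_mod_cast hkk
      _ = ((22 * (L + m + 1) : ℕ) : ℕ∞) + ((k14 : ℕ∞) + (k23 : ℕ∞)) := by push_cast; ring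
      _ ≤ _ := add_le_add_right (le_max_right _ _) _

end WallDuality
end

section
/- Hyperbolicity of graded duals: let (C_R)_{R≥1} be a graded system on a set with walls (S,P) with constants L_R, m_R, κ_R, let λ_R be positive reals with λ_R ≤ κ_R and Λ := Σ_{R≥1} λ_R (L_R + m_R + 1) < ∞, set Dist(x,y) = Σ_{R≥1} λ_R · dist_{C_R}(x,y), and let X = {x ∈ X̂ : Dist(x,φ_s) < ∞ for all s ∈ S}. Then (X, Dist) is four-point hyperbolic with constant 16Λ: for all x₁,x₂,x₃,x₄ ∈ X, Dist(x₁,x₂) + Dist(x₃,x₄) ≤ 16Λ + max{Dist(x₁,x₃) + Dist(x₂,x₄), Dist(x₁,x₄) + Dist(x₂,x₃)}. -/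
open Set

namespace WallDuality

open scoped ENNReal

variable {S : Type*} (P : Set (Set (Set S)))

/-- The weighted distance associated with a sequence of dualisable systems. -/
noncomputable def gradedDist (C : ℕ → Set (Set ↥P)) (lam : ℕ → ℝ≥0∞)
    (x y : ↥P → Set S) : ℝ≥0∞ :=
  ∑' R, lam R * (wallDist P (C R) x y : ℝ≥0∞)

/-- The graded dual space. -/
def gradedSpace (C : ℕ → Set (Set ↥P)) (lam : ℕ → ℝ≥0∞) : Set (↥P → Set S) :=
  {x | IsUltra P x ∧ ∀ s : S, gradedDist P C lam x (principalUF P s) ≠ ⊤}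

/-- A graded system on `(S, P)`. -/
structure IsGradedSystem (C : ℕ → Set (Set ↥P)) (L m : ℕ → ℕ) (κ : ℕ → ℝ≥0∞) : Prop where
  mono : ∀ R, C R ⊆ C (R + 1)
  chain : ∀ R, IsChainSystem P (C R)
  separated : ∀ R, IsSeparated P (C R) (L R)
  gluable : ∀ R, IsGluable P (C R) (m R)
  L_pos : ∀ R, 1 ≤ L R
  kappa_pos : ∀ R, 0 < κ R
  kappa_fin : ∀ R, κ R ≠ ⊤
  bounded : ∀ s t : S, ∃ M : ℝ≥0∞, M ≠ ⊤ ∧ ∀ c : ℕ → Set ↥P,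
    (∀ R, c R ∈ C R ∧ ∀ w ∈ c R, principalUF P s w ≠ principalUF P t w) →
    (∑' R, κ R * ((c R).encard : ℝ≥0∞)) ≤ M

end WallDuality

namespace WallDuality

open scoped ENNReal


section Lemmas

variable {S : Type*} {P : Set (Set (Set S))}

lemma compl_mem_wall (hP : IsWallSystem P) (w : ↥P) {A : Set S} (hA : A ∈ w.1) :
    Aᶜ ∈ w.1 := by
  obtain ⟨B, hB⟩ := hP w.1 w.2
  rw [hB] at hA ⊢
  simp only [Set.mem_insert_iff, Set.mem_singleton_iff] at hA ⊢
  rcases hA with h | h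
  · right; rw [h]
  · left; rw [h, compl_compl]

lemma sep_compl (hP : IsWallSystem P) {x y : ↥P → Set S}
    (hx : IsUltra P x) (hy : IsUltra P y) {w : ↥P} (hxy : x w ≠ y w) :
    y w = (x w)ᶜ := by
  obtain ⟨B, hB⟩ := hP w.1 w.2
  have hxw := hx.1 w
  have hyw := hy.1 w
  rw [hB] at hxw hyw
  simp only [Set.mem_insert_iff, Set.mem_singleton_iff] at hxw hyw
  rcases hxw with h1 | h1 <;> rcases hyw with h2 | h2 <;>
    first
      | (exact absurd (h1.trans h2.symm) hxy)
      | (rw [h1, h2, compl_compl])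
      | (rw [h1, h2])

lemma side_eq_or (hP : IsWallSystem P) {x y : ↥P → Set S}
    (hx : IsUltra P x) (hy : IsUltra P y) {w : ↥P} (hxy : x w ≠ y w)
    {B : Set S} (hB : B ∈ w.1) : B = x w ∨ B = y w := by
  obtain ⟨A, hA⟩ := hP w.1 w.2
  have hxw := hx.1 w
  have hyw := hy.1 w
  rw [hA] at hxw hyw hB
  simp only [Set.mem_insert_iff, Set.mem_singleton_iff] at hxw hyw hB
  rcases hxw with h1 | h1 <;> rcases hyw with h2 | h2 <;> rcases hB with h3 | h3 <;>
    first
      | (exact absurd (h1.trans h2.symm) hxy)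
      | (exact Or.inl (h3.trans h1.symm))
      | (exact Or.inr (h3.trans h2.symm))

lemma not_crosses_iff {w z : ↥P} :
    ¬ Crosses P w z ↔ ∃ A ∈ w.1, ∃ B ∈ z.1, A ∩ B = ∅ := by
  unfold Crosses
  push_neg
  simp [Set.not_nonempty_iff_eq_empty]

lemma Crosses.symm' {w z : ↥P} (h : Crosses P w z) : Crosses P z w := by
  intro A hA B hB
  rw [Set.inter_comm]
  exact h B hB A hA

/-- Two non-crossing walls which both separate `x` from `y` are nested compatibly. -/
lemma sep_nest (hP : IsWallSystem P) {x y : ↥P → Set S}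
    (hx : IsUltra P x) (hy : IsUltra P y) {w z : ↥P}
    (hw : x w ≠ y w) (hz : x z ≠ y z) (hnc : ¬ Crosses P w z) :
    x w ⊆ x z ∨ x z ⊆ x w := by
  obtain ⟨A, hA, B, hB, hAB⟩ := not_crosses_iff.1 hnc
  have hycw : y w = (x w)ᶜ := sep_compl hP hx hy hw
  have hycz : y z = (x z)ᶜ := sep_compl hP hx hy hz
  have hsub : A ⊆ Bᶜ := by
    intro a ha hb
    have : a ∈ A ∩ B := ⟨ha, hb⟩
    rw [hAB] at this
    exact this
  rcases side_eq_or hP hx hy hw hA with hA1 | hA1 <;>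
      rcases side_eq_or hP hx hy hz hB with hB1 | hB1
  · exfalso
    subst hA1; subst hB1
    have : x z = y z := hx.2 w z (x w) (y z) (hx.1 w) (hy.1 z)
      (by rw [hycz]; exact hsub) rfl
    exact hz this
  · left
    subst hA1; subst hB1
    rwa [hycz, compl_compl] at hsub
  · right
    subst hA1; subst hB1
    have h2 : x z ⊆ (y w)ᶜ := by
      intro a ha hb
      have : a ∈ y w ∩ x z := ⟨hb, ha⟩
      rw [hAB] at this
      exact this
    rwa [hycw, compl_compl] at h2
  · exfalso
    subst hA1; subst hB1
    have : x z = y z := (hy.2 w z (y w) (x z) (hy.1 w) (hx.1 z)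
      (by rw [← compl_compl (x z), ← hycz]; exact hsub) rfl).symm
    exact hz this

lemma not_crosses_of_subset (hP : IsWallSystem P) {x : ↥P → Set S}
    (hx : IsUltra P x) {w z : ↥P} (h : x w ⊆ x z) : ¬ Crosses P w z := by
  intro hc
  obtain ⟨a, ha1, ha2⟩ := hc (x w) (hx.1 w) ((x z)ᶜ) (compl_mem_wall hP z (hx.1 z))
  exact ha2 (h ha1)

lemma chain_not_crosses (hP : IsWallSystem P) {c : Set ↥P} (hc : IsWallChain P c) {w z : ↥P}
    (hw : w ∈ c) (hz : z ∈ c) : ¬ Crosses P w z := by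
  obtain ⟨σ, hσ1, hσ2⟩ := hc
  have key : ∀ a b : ↥P, a ∈ c → b ∈ c → σ a ⊆ σ b → ¬ Crosses P a b := by
    intro a b ha hb hab hcr
    obtain ⟨s, hs1, hs2⟩ := hcr (σ a) (hσ1 a ha) ((σ b)ᶜ) (compl_mem_wall hP b (hσ1 b hb))
    exact hs2 (hab hs1)
  rcases hσ2 w hw z hz with h | h
  · exact key w z hw hz h
  · intro hcr
    exact key z w hz hw h hcr.symm'

end Lemmas

section Merge

variable {S : Type*} {P : Set (Set (Set S))}

lemma chain_total (hP : IsWallSystem P) {x y : ↥P → Set S}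
    (hx : IsUltra P x) (hy : IsUltra P y) {c : Set ↥P} (hc : IsWallChain P c)
    (hsep : ∀ w ∈ c, x w ≠ y w) :
    ∀ a ∈ c, ∀ b ∈ c, x a ⊆ x b ∨ x b ⊆ x a := fun a ha b hb =>
  sep_nest hP hx hy (hsep a ha) (hsep b hb) (chain_not_crosses hP hc ha hb)

/-- Mixed dichotomy with a witness ultrafilter: a wall "before" the witness and one
"after" it are either crossing or nested in the expected direction. -/
lemma cross_or_mono (hP : IsWallSystem P) {x y zs : ↥P → Set S}
    (hx : IsUltra P x) (hy : IsUltra P y) (hz : IsUltra P zs) {w z : ↥P}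
    (hw : x w ≠ y w) (hzz : x z ≠ y z)
    (hwit1 : zs w = y w) (hwit2 : zs z = x z)
    (hnc : ¬ Crosses P w z) : x w ⊆ x z := by
  rcases sep_nest hP hx hy hw hzz hnc with h | h
  · exact h
  · exfalso
    have hyc : y w ⊆ y z := by
      rw [sep_compl hP hx hy hw, sep_compl hP hx hy hzz]
      exact Set.compl_subset_compl.2 h
    have : zs z = y z := hz.2 w z (y w) (y z) (hy.1 w) (hy.1 z) hyc hwit1
    rw [hwit2] at this
    exact hzz this

/-- The key merging lemma: two chains of `C`, all of whose walls separate `x`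
from `y`, one lying "before" a witness ultrafilter and the other "after" it,
have total size at most `dist_C(x,y) + L + m + 1`. -/
lemma merge (hP : IsWallSystem P) {CR : Set (Set ↥P)} {LR mR : ℕ}
    (hchain : IsChainSystem P CR) (hsepd : IsSeparated P CR LR)
    (hglue : IsGluable P CR mR)
    {x y zs : ↥P → Set S} (hx : IsUltra P x) (hy : IsUltra P y) (hz : IsUltra P zs)
    {u v : Set ↥P} (hu : u ∈ CR) (hv : v ∈ CR) (hdisj : Disjoint u v)
    (hsep : ∀ w ∈ u ∪ v, x w ≠ y w)
    (hwu : ∀ w ∈ u, zs w = y w) (hwv : ∀ w ∈ v, zs w = x w) :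
    u.encard + v.encard ≤ wallDist P CR x y + ((LR : ℕ∞) + (mR : ℕ∞) + 1) := by
  have hqual : ∀ c : Set ↥P, c ∈ CR → (∀ w ∈ c, x w ≠ y w) →
      c.encard ≤ wallDist P CR x y := by
    intro c h1 h2
    exact le_iSup₂ (f := fun c (_ : c ∈ {c | c ∈ CR ∧ ∀ w ∈ c, x w ≠ y w}) =>
      Set.encard c) c ⟨h1, h2⟩
  by_cases hufin : u.Finite
  swap
  · have : wallDist P CR x y = ⊤ := by
      have h1 := hqual u hu (fun w hw => hsep w (Or.inl hw))
      rw [Set.encard_eq_top hufin] at h1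
      exact top_le_iff.1 h1
    rw [this, top_add]
    exact le_top
  by_cases hvfin : v.Finite
  swap
  · have : wallDist P CR x y = ⊤ := by
      have h1 := hqual v hv (fun w hw => hsep w (Or.inr hw))
      rw [Set.encard_eq_top hvfin] at h1
      exact top_le_iff.1 h1
    rw [this, top_add]
    exact le_top
  have hsepu : ∀ w ∈ u, x w ≠ y w := fun w hw => hsep w (Or.inl hw)
  have hsepv : ∀ w ∈ v, x w ≠ y w := fun w hw => hsep w (Or.inr hw)
  have htotv := chain_total hP hx hy (hchain.2 v hv) hsepv
  have htotu := chain_total hP hx hy (hchain.2 u hu) hsepu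
  -- the dichotomy for mixed pairs
  have hdich : ∀ w ∈ u, ∀ z ∈ v, ¬ Crosses P w z → x w ⊆ x z := fun w hw z hzz hnc =>
    cross_or_mono hP hx hy hz (hsepu w hw) (hsepv z hzz) (hwu w hw) (hwv z hzz) hnc
  have hsubnc : ∀ w ∈ u, ∀ z ∈ v, x w ⊆ x z → ¬ Crosses P w z := fun w _ z _ hss =>
    not_crosses_of_subset hP hx hss
  -- construct a small set `rem` killing all crossings between `u` and `v`
  obtain ⟨rem, hremcard, hnc⟩ : ∃ rem : Set ↥P, rem.encard ≤ (LR : ℕ∞) + 1 ∧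
      ∀ w ∈ u \ rem, ∀ z ∈ v \ rem, ¬ Crosses P w z := by
    set Ycr := {z ∈ v | ∃ w ∈ u, Crosses P w z} with hYcr
    rcases Set.eq_empty_or_nonempty Ycr with hY | hY
    · refine ⟨∅, by simp, fun w hw z hzz hcr => ?_⟩
      have : z ∈ Ycr := ⟨hzz.1, w, hw.1, hcr⟩
      rw [hY] at this
      exact this
    · have hYfin : Ycr.Finite := hvfin.subset (fun z hzz => hzz.1)
      obtain ⟨z₁, hz₁Y, hz₁min⟩ : ∃ z₁ ∈ Ycr, ∀ z ∈ Ycr, x z₁ ⊆ x z := by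
        obtain ⟨a, ha, hamin⟩ := Set.Finite.exists_minimalFor x Ycr hYfin hY
        refine ⟨a, ha, fun b hb => ?_⟩
        rcases htotv a ha.1 b hb.1 with h | h
        · exact h
        · exact hamin hb h
      by_cases hY2 : ∃ z₂ ∈ Ycr, z₂ ≠ z₁
      · have hY1fin : (Ycr \ {z₁}).Finite := hYfin.subset Set.diff_subset
        have hY1ne : (Ycr \ {z₁}).Nonempty := by
          obtain ⟨z₂, hz₂, hne⟩ := hY2
          exact ⟨z₂, hz₂, hne⟩
        obtain ⟨z₂, hz₂Y, hz₂min⟩ : ∃ z₂ ∈ Ycr \ {z₁}, ∀ z ∈ Ycr \ {z₁}, x z₂ ⊆ x z := by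
          obtain ⟨a, ha, hamin⟩ := Set.Finite.exists_minimalFor x _ hY1fin hY1ne
          refine ⟨a, ha, fun b hb => ?_⟩
          rcases htotv a ha.1.1 b hb.1.1 with h | h
          · exact h
          · exact hamin hb h
        have hz₁v : z₁ ∈ v := hz₁Y.1
        have hz₂v : z₂ ∈ v := hz₂Y.1.1
        have hz₁₂ : x z₁ ⊆ x z₂ := hz₁min z₂ hz₂Y.1
        set cset := {w ∈ u | Crosses P w z₂} with hcset
        have hcross12 : ∀ w ∈ cset, Crosses P w z₁ ∧ Crosses P w z₂ := by
          intro w hw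
          refine ⟨?_, hw.2⟩
          by_contra hncr
          exact hsubnc w hw.1 z₂ hz₂v ((hdich w hw.1 z₁ hz₁v hncr).trans hz₁₂) hw.2
        have hLc : cset.encard ≤ (LR : ℕ∞) := by
          refine hsepd z₁ z₂ (fun h => hz₂Y.2 h.symm) ?_ cset ?_ hcross12
          · exact hchain.1.subset_mem v hv _ (by
              intro t ht
              rcases ht with h | h
              · rw [h]; exact hz₁v
              · rw [Set.mem_singleton_iff] at h; rw [h]; exact hz₂v)
          · exact hchain.1.subset_mem u hu _ (fun w hw => hw.1)
        refine ⟨cset ∪ {z₁}, ?_, ?_⟩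
        · calc (cset ∪ {z₁}).encard ≤ cset.encard + ({z₁} : Set ↥P).encard :=
              Set.encard_union_le _ _
            _ ≤ (LR : ℕ∞) + 1 := by
              rw [Set.encard_singleton]
              exact add_le_add_left hLc 1
        · intro w hw z hzz hcr
          have hzY : z ∈ Ycr := ⟨hzz.1, w, hw.1, hcr⟩
          have hzne : z ≠ z₁ := fun h => hzz.2 (by rw [h]; exact Or.inr rfl)
          have hz₂z : x z₂ ⊆ x z := hz₂min z ⟨hzY, hzne⟩
          have hwnc : w ∉ cset := fun h => hw.2 (Or.inl h)
          have : ¬ Crosses P w z₂ := fun h => hwnc ⟨hw.1, h⟩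
          exact hsubnc w hw.1 z hzz.1 ((hdich w hw.1 z₂ hz₂v this).trans hz₂z) hcr
      · push_neg at hY2
        refine ⟨{z₁}, ?_, ?_⟩
        · rw [Set.encard_singleton]
          calc (1 : ℕ∞) ≤ 1 + (LR : ℕ∞) := le_self_add
            _ = (LR : ℕ∞) + 1 := add_comm _ _
        · intro w hw z hzz hcr
          have hzY : z ∈ Ycr := ⟨hzz.1, w, hw.1, hcr⟩
          exact hzz.2 (Set.mem_singleton_iff.2 (hY2 z hzY))
  -- glue the two remaining pieces
  set c₁ := u \ rem with hc₁def
  set c₂ := v \ rem with hc₂def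
  have hc₁ : c₁ ∈ CR := hchain.1.subset_mem u hu _ Set.diff_subset
  have hc₂ : c₂ ∈ CR := hchain.1.subset_mem v hv _ Set.diff_subset
  have hdisj' : Disjoint c₁ c₂ := hdisj.mono Set.diff_subset Set.diff_subset
  have horder : ∀ w₁ ∈ c₁, ∀ w₂ ∈ c₂, x w₁ ⊆ x w₂ := fun w hw z hzz =>
    hdich w hw.1 z hzz.1 (hnc w hw z hzz)
  have hchord : IsChainOrder P x (c₁ ∪ c₂) := by
    constructor
    · exact fun w _ => hx.1 w
    · intro w₁ h₁ w₂ h₂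
      rcases h₁ with h₁ | h₁ <;> rcases h₂ with h₂ | h₂
      · exact htotu w₁ h₁.1 w₂ h₂.1
      · exact Or.inl (horder w₁ h₁ w₂ h₂)
      · exact Or.inr (horder w₂ h₂ w₁ h₁)
      · exact htotv w₁ h₁.1 w₂ h₂.1
  obtain ⟨b, hbsub, hbcard, -, -, -, hbC⟩ :=
    hglue c₁ hc₁ c₂ hc₂ x hchord hdisj' horder
  have hg : ((c₁ ∪ c₂) \ b).encard ≤ wallDist P CR x y := by
    refine hqual _ hbC (fun w hw => hsep w ?_)
    rcases hw.1 with h | h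
    · exact Or.inl h.1
    · exact Or.inr h.1
  have hUV : u ∪ v ⊆ ((c₁ ∪ c₂) \ b) ∪ (b ∪ rem) := by
    intro w hw
    by_cases hr : w ∈ rem
    · exact Or.inr (Or.inr hr)
    · have hw' : w ∈ c₁ ∪ c₂ := by
        rcases hw with h | h
        · exact Or.inl ⟨h, hr⟩
        · exact Or.inr ⟨h, hr⟩
      by_cases hb : w ∈ b
      · exact Or.inr (Or.inl hb)
      · exact Or.inl ⟨hw', hb⟩
  calc u.encard + v.encard = (u ∪ v).encard := (Set.encard_union_eq hdisj).symm
    _ ≤ (((c₁ ∪ c₂) \ b) ∪ (b ∪ rem)).encard := Set.encard_mono hUV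
    _ ≤ ((c₁ ∪ c₂) \ b).encard + (b ∪ rem).encard := Set.encard_union_le _ _
    _ ≤ ((c₁ ∪ c₂) \ b).encard + (b.encard + rem.encard) :=
        add_le_add_right (Set.encard_union_le _ _) _
    _ ≤ wallDist P CR x y + ((mR : ℕ∞) + ((LR : ℕ∞) + 1)) :=
        add_le_add hg (add_le_add hbcard hremcard)
    _ = wallDist P CR x y + ((LR : ℕ∞) + (mR : ℕ∞) + 1) := by ring_nf

end Merge

section Pattern

variable {S : Type*} {P : Set (Set (Set S))}

/-- A wall of pattern `{13|24}` crosses every wall of pattern `{14|23}`. -/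
lemma plus_crosses_minus (hP : IsWallSystem P) {x₁ x₂ x₃ x₄ : ↥P → Set S}
    (h1 : IsUltra P x₁) (h2 : IsUltra P x₂) (h3 : IsUltra P x₃) (h4 : IsUltra P x₄)
    {a b : ↥P}
    (ha : x₁ a = x₃ a ∧ x₂ a = x₄ a ∧ x₁ a ≠ x₂ a)
    (hb : x₁ b = x₄ b ∧ x₂ b = x₃ b ∧ x₁ b ≠ x₂ b) :
    Crosses P a b := by
  by_contra hnc
  obtain ⟨A, hA, B, hB, hAB⟩ := not_crosses_iff.1 hnc
  have hsub : A ⊆ Bᶜ := by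
    intro s hs hs'
    have : s ∈ A ∩ B := ⟨hs, hs'⟩
    rw [hAB] at this
    exact this
  have hcb : x₂ b = (x₁ b)ᶜ := sep_compl hP h1 h2 hb.2.2
  rcases side_eq_or hP h1 h2 ha.2.2 hA with hA1 | hA1 <;>
      rcases side_eq_or hP h1 h2 hb.2.2 hB with hB1 | hB1
  · -- A = x₁ a, B = x₁ b : x₁ a ⊆ x₂ b, contradiction via x₁
    subst hA1; subst hB1
    have : x₁ b = x₂ b := h1.2 a b (x₁ a) (x₂ b) (h1.1 a) (h2.1 b)
      (by rw [hcb]; exact hsub) rfl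
    exact hb.2.2 this
  · -- A = x₁ a, B = x₂ b : x₁ a ⊆ x₁ b, contradiction via x₃
    subst hA1; subst hB1
    have hsub' : x₁ a ⊆ x₁ b := by rwa [hcb, compl_compl] at hsub
    have : x₃ b = x₁ b := h3.2 a b (x₁ a) (x₁ b) (by rw [ha.1]; exact h3.1 a)
      (h1.1 b) hsub' ha.1.symm
    rw [← hb.2.1] at this
    exact hb.2.2 this.symm
  · -- A = x₂ a, B = x₁ b : x₂ a ⊆ x₂ b, contradiction via x₄
    subst hA1; subst hB1
    have hsub' : x₂ a ⊆ x₂ b := by rwa [← hcb] at hsub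
    have : x₄ b = x₂ b := h4.2 a b (x₂ a) (x₂ b) (by rw [ha.2.1]; exact h4.1 a)
      (h2.1 b) hsub' ha.2.1.symm
    rw [← hb.1] at this
    exact hb.2.2 this
  · -- A = x₂ a, B = x₂ b : x₂ a ⊆ x₁ b, contradiction via x₂
    subst hA1; subst hB1
    have hsub' : x₂ a ⊆ x₁ b := by rwa [hcb, compl_compl] at hsub
    have : x₂ b = x₁ b := h2.2 a b (x₂ a) (x₁ b) (h2.1 a) (h1.1 b) hsub' rfl
    exact hb.2.2 this.symm

end Pattern

section Key

variable {S : Type*} {P : Set (Set (Set S))}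

open scoped ENNReal

/-- The master bound: assuming chains of pattern `{14|23}` are uniformly short,
any pair of qualifying families is bounded by the `(14),(23)` pairing. -/
lemma key_bound (hP : IsWallSystem P) (C : ℕ → Set (Set ↥P)) (L m : ℕ → ℕ)
    (lam : ℕ → ℝ≥0∞)
    (hchain : ∀ R, IsChainSystem P (C R)) (hsepd : ∀ R, IsSeparated P (C R) (L R))
    (hglue : ∀ R, IsGluable P (C R) (m R))
    {x₁ x₂ x₃ x₄ : ↥P → Set S}
    (h1 : IsUltra P x₁) (h2 : IsUltra P x₂) (h3 : IsUltra P x₃) (h4 : IsUltra P x₄)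
    (hfew : ∀ R, ∀ d ∈ C R, (∀ w ∈ d, x₁ w = x₄ w ∧ x₂ w = x₃ w ∧ x₁ w ≠ x₂ w) →
      d.encard ≤ (L R : ℕ∞))
    (c c' : ℕ → Set ↥P)
    (hc : ∀ R, c R ∈ C R ∧ ∀ w ∈ c R, x₁ w ≠ x₂ w)
    (hc' : ∀ R, c' R ∈ C R ∧ ∀ w ∈ c' R, x₃ w ≠ x₄ w) :
    ∑' R, lam R * (((c R).encard : ℝ≥0∞) + ((c' R).encard : ℝ≥0∞)) ≤
      gradedDist P C lam x₁ x₄ + gradedDist P C lam x₂ x₃ +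
        16 * ∑' R, lam R * ((L R : ℝ≥0∞) + (m R : ℝ≥0∞) + 1) := by
  have key : ∀ R, (c R).encard + (c' R).encard ≤
      wallDist P (C R) x₁ x₄ + wallDist P (C R) x₂ x₃ +
        16 * ((L R : ℕ∞) + (m R : ℕ∞) + 1) := by
    intro R
    have hcR := (hc R).1
    have hcsep := (hc R).2
    have hc'R := (hc' R).1
    have hc'sep := (hc' R).2
    set Ac := {w ∈ c R | x₃ w = x₂ w ∧ x₄ w = x₂ w} with hAc
    set Bc := {w ∈ c R | x₃ w = x₁ w ∧ x₄ w = x₂ w} with hBc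
    set Cc := {w ∈ c R | x₃ w = x₂ w ∧ x₄ w = x₁ w} with hCc
    set Dc := {w ∈ c R | x₃ w = x₁ w ∧ x₄ w = x₁ w} with hDc
    set Pc := {z ∈ c' R | x₁ z = x₄ z ∧ x₂ z = x₄ z} with hPc
    set Qc := {z ∈ c' R | x₁ z = x₃ z ∧ x₂ z = x₄ z} with hQc
    set Rc := {z ∈ c' R | x₁ z = x₄ z ∧ x₂ z = x₃ z} with hRc
    set Tc := {z ∈ c' R | x₁ z = x₃ z ∧ x₂ z = x₃ z} with hTc
    have hcov : c R ⊆ ((Ac ∪ Bc) ∪ Dc) ∪ Cc := by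
      intro w hw
      rcases side_eq_or hP h1 h2 (hcsep w hw) (h3.1 w) with h3w | h3w <;>
          rcases side_eq_or hP h1 h2 (hcsep w hw) (h4.1 w) with h4w | h4w
      · exact Or.inl (Or.inr ⟨hw, h3w, h4w⟩)
      · exact Or.inl (Or.inl (Or.inr ⟨hw, h3w, h4w⟩))
      · exact Or.inr ⟨hw, h3w, h4w⟩
      · exact Or.inl (Or.inl (Or.inl ⟨hw, h3w, h4w⟩))
    have hcov' : c' R ⊆ ((Pc ∪ Qc) ∪ Tc) ∪ Rc := by
      intro z hz
      rcases side_eq_or hP h3 h4 (hc'sep z hz) (h1.1 z) with h1z | h1z <;>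
          rcases side_eq_or hP h3 h4 (hc'sep z hz) (h2.1 z) with h2z | h2z
      · exact Or.inl (Or.inr ⟨hz, h1z, h2z⟩)
      · exact Or.inl (Or.inl (Or.inr ⟨hz, h1z, h2z⟩))
      · exact Or.inr ⟨hz, h1z, h2z⟩
      · exact Or.inl (Or.inl (Or.inl ⟨hz, h1z, h2z⟩))
    -- first bucket : pair (x₁, x₄), witness x₂
    have hM1 : (Ac ∪ Bc).encard + Tc.encard ≤
        wallDist P (C R) x₁ x₄ + ((L R : ℕ∞) + (m R : ℕ∞) + 1) := by
      refine merge hP (hchain R) (hsepd R) (hglue R) h1 h4 h2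
        ((hchain R).1.subset_mem _ hcR _ ?_) ((hchain R).1.subset_mem _ hc'R _ ?_)
        ?_ ?_ ?_ ?_
      · rintro w (hw | hw) <;> exact hw.1
      · exact fun z hz => hz.1
      · rw [Set.disjoint_left]
        rintro w (hw | hw) hw' <;>
          exact hcsep w hw.1 (hw'.2.1.trans hw'.2.2.symm)
      · rintro w (hw | hw)
        · rcases hw with hw | hw <;>
          · intro h
            exact hcsep w hw.1 (h.trans hw.2.2)
        · intro h
          exact hc'sep w hw.1 (hw.2.1.symm.trans h)
      · rintro w (hw | hw) <;> exact hw.2.2.symm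
      · exact fun z hz => hz.2.2.trans hz.2.1.symm
    -- second bucket : pair (x₂, x₃), witness x₄
    have hM2 : Dc.encard + (Pc ∪ Qc).encard ≤
        wallDist P (C R) x₂ x₃ + ((L R : ℕ∞) + (m R : ℕ∞) + 1) := by
      refine merge hP (hchain R) (hsepd R) (hglue R) h2 h3 h4
        ((hchain R).1.subset_mem _ hcR _ ?_) ((hchain R).1.subset_mem _ hc'R _ ?_)
        ?_ ?_ ?_ ?_
      · exact fun w hw => hw.1
      · rintro z (hz | hz) <;> exact hz.1
      · rw [Set.disjoint_left]
        rintro w hw (hp | hq)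
        · exact hcsep w hw.1 (hp.2.1.trans hp.2.2.symm)
        · exact hcsep w hw.1 (hq.2.2.trans hw.2.2).symm
      · rintro w (hw | hw)
        · intro h
          exact hcsep w hw.1 (h.trans hw.2.1).symm
        · rcases hw with hz | hz <;>
          · intro h
            exact hc'sep w hz.1 (h.symm.trans hz.2.2)
      · exact fun w hw => hw.2.2.trans hw.2.1.symm
      · rintro z (hz | hz) <;> exact hz.2.2.symm
    -- the two discarded classes are `{14|23}`-chains, hence short
    have hCcL : Cc.encard ≤ (L R : ℕ∞) := by
      refine hfew R Cc ((hchain R).1.subset_mem _ hcR _ (fun w hw => hw.1)) ?_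
      exact fun w hw => ⟨hw.2.2.symm, hw.2.1.symm, hcsep w hw.1⟩
    have hRcL : Rc.encard ≤ (L R : ℕ∞) := by
      refine hfew R Rc ((hchain R).1.subset_mem _ hc'R _ (fun z hz => hz.1)) ?_
      refine fun z hz => ⟨hz.2.1, hz.2.2, fun h => ?_⟩
      exact hc'sep z hz.1 ((hz.2.2.symm.trans h.symm).trans hz.2.1)
    -- counting
    have hcnt : (c R).encard ≤ (Ac ∪ Bc).encard + Dc.encard + Cc.encard :=
      (Set.encard_mono hcov).trans ((Set.encard_union_le _ _).trans
        (add_le_add_left (Set.encard_union_le _ _) _))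
    have hcnt' : (c' R).encard ≤ (Pc ∪ Qc).encard + Tc.encard + Rc.encard :=
      (Set.encard_mono hcov').trans ((Set.encard_union_le _ _).trans
        (add_le_add_left (Set.encard_union_le _ _) _))
    set K := (L R : ℕ∞) + (m R : ℕ∞) + 1 with hK
    have hLK : (L R : ℕ∞) ≤ K := le_self_add.trans le_self_add
    have hconst : K + K + ((L R : ℕ∞) + (L R : ℕ∞)) ≤ 16 * K := by
      calc K + K + ((L R : ℕ∞) + (L R : ℕ∞)) ≤ K + K + (K + K) :=
            add_le_add_right (add_le_add hLK hLK) _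
        _ = 4 * K := by ring
        _ ≤ 16 * K := mul_le_mul_left (by norm_num) K
    calc (c R).encard + (c' R).encard
        ≤ ((Ac ∪ Bc).encard + Dc.encard + Cc.encard) +
            ((Pc ∪ Qc).encard + Tc.encard + Rc.encard) := add_le_add hcnt hcnt'
      _ = ((Ac ∪ Bc).encard + Tc.encard) + (Dc.encard + (Pc ∪ Qc).encard) +
            (Cc.encard + Rc.encard) := by ring
      _ ≤ (wallDist P (C R) x₁ x₄ + K) + (wallDist P (C R) x₂ x₃ + K) +
            ((L R : ℕ∞) + (L R : ℕ∞)) :=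
          add_le_add (add_le_add hM1 hM2) (add_le_add hCcL hRcL)
      _ = wallDist P (C R) x₁ x₄ + wallDist P (C R) x₂ x₃ +
            (K + K + ((L R : ℕ∞) + (L R : ℕ∞))) := by ring
      _ ≤ wallDist P (C R) x₁ x₄ + wallDist P (C R) x₂ x₃ + 16 * K :=
          add_le_add_right hconst _
  -- cast to `ℝ≥0∞` and sum
  have keyE : ∀ R, lam R * (((c R).encard : ℝ≥0∞) + ((c' R).encard : ℝ≥0∞)) ≤
      lam R * ((wallDist P (C R) x₁ x₄ : ℝ≥0∞) + (wallDist P (C R) x₂ x₃ : ℝ≥0∞) +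
        16 * ((L R : ℝ≥0∞) + (m R : ℝ≥0∞) + 1)) := by
    intro R
    refine mul_le_mul_right ?_ _
    have h := ENat.toENNReal_mono (key R)
    simpa using h
  calc ∑' R, lam R * (((c R).encard : ℝ≥0∞) + ((c' R).encard : ℝ≥0∞))
      ≤ ∑' R, lam R * ((wallDist P (C R) x₁ x₄ : ℝ≥0∞) +
          (wallDist P (C R) x₂ x₃ : ℝ≥0∞) +
          16 * ((L R : ℝ≥0∞) + (m R : ℝ≥0∞) + 1)) := ENNReal.tsum_le_tsum keyE
    _ = ∑' R, (lam R * (wallDist P (C R) x₁ x₄ : ℝ≥0∞) +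
          (lam R * (wallDist P (C R) x₂ x₃ : ℝ≥0∞) +
            16 * (lam R * ((L R : ℝ≥0∞) + (m R : ℝ≥0∞) + 1)))) :=
        tsum_congr (fun R => by ring)
    _ = gradedDist P C lam x₁ x₄ + (gradedDist P C lam x₂ x₃ +
          16 * ∑' R, lam R * ((L R : ℝ≥0∞) + (m R : ℝ≥0∞) + 1)) := by
        rw [ENNReal.tsum_add, ENNReal.tsum_add, ENNReal.tsum_mul_left]
        rfl
    _ = gradedDist P C lam x₁ x₄ + gradedDist P C lam x₂ x₃ +
          16 * ∑' R, lam R * ((L R : ℝ≥0∞) + (m R : ℝ≥0∞) + 1) := (add_assoc _ _ _).symm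

end Key

section Reduce

open scoped ENNReal

variable {S : Type*} {P : Set (Set (Set S))}

lemma toENNReal_iSup {ι : Sort*} (f : ι → ℕ∞) :
    ((⨆ i, f i : ℕ∞) : ℝ≥0∞) = ⨆ i, (f i : ℝ≥0∞) := by
  cases isEmpty_or_nonempty ι
  · simp [iSup_of_empty]
  · refine le_antisymm ?_ (iSup_le fun i => ENat.toENNReal_mono (le_iSup f i))
    rcases eq_top_or_lt_top (⨆ i, f i) with h | h
    · rw [h]
      have hn : ∀ n : ℕ, (n : ℝ≥0∞) ≤ ⨆ i, ((f i : ℕ∞) : ℝ≥0∞) := by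
        intro n
        have hlt : (n : ℕ∞) < ⨆ i, f i := by
          rw [h]
          exact lt_of_le_of_ne le_top (by simp)
        obtain ⟨i, hi⟩ := lt_iSup_iff.1 hlt
        refine le_iSup_of_le i ?_
        exact_mod_cast ENat.toENNReal_mono hi.le
      calc ((⊤ : ℕ∞) : ℝ≥0∞) = ⊤ := ENat.toENNReal_top
        _ = ⨆ n : ℕ, (n : ℝ≥0∞) := ENNReal.iSup_natCast.symm
        _ ≤ _ := iSup_le hn
    · obtain ⟨i, hi⟩ := ENat.exists_eq_iSup_of_lt_top h
      rw [← hi]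
      exact le_iSup (fun i => ((f i : ℕ∞) : ℝ≥0∞)) i

lemma iSup_add_iSup_eq' {ι κ : Type*} [Nonempty ι] [Nonempty κ]
    (f : ι → ℝ≥0∞) (g : κ → ℝ≥0∞) :
    iSup f + iSup g = ⨆ q : ι × κ, (f q.1 + g q.2) :=
  le_antisymm (ENNReal.iSup_add_iSup_le fun i j => le_iSup_of_le (i, j) le_rfl)
    (iSup_le fun q => add_le_add (le_iSup f q.1) (le_iSup g q.2))

lemma sum_reduce [Nonempty ↥P] (C : ℕ → Set (Set ↥P)) (lam : ℕ → ℝ≥0∞)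
    (hempty : ∀ R, (∅ : Set ↥P) ∈ C R)
    {x y z t : ↥P → Set S} {B : ℝ≥0∞}
    (hkey : ∀ c c' : ℕ → Set ↥P,
      (∀ R, c R ∈ C R ∧ ∀ w ∈ c R, x w ≠ y w) →
      (∀ R, c' R ∈ C R ∧ ∀ w ∈ c' R, z w ≠ t w) →
      ∑' R, lam R * (((c R).encard : ℝ≥0∞) + ((c' R).encard : ℝ≥0∞)) ≤ B) :
    gradedDist P C lam x y + gradedDist P C lam z t ≤ B := by
  classical
  set Qp := {p : (ℕ → Set ↥P) × (ℕ → Set ↥P) //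
    (∀ R, p.1 R ∈ C R ∧ ∀ w ∈ p.1 R, x w ≠ y w) ∧
    (∀ R, p.2 R ∈ C R ∧ ∀ w ∈ p.2 R, z w ≠ t w)} with hQp
  haveI hQpne : Nonempty Qp :=
    ⟨⟨(fun _ => ∅, fun _ => ∅), ⟨fun R => ⟨hempty R, by simp⟩, fun R => ⟨hempty R, by simp⟩⟩⟩⟩
  have hmain : ∀ F : Finset ℕ,
      (∑ R ∈ F, (lam R * ((wallDist P (C R) x y : ℕ∞) : ℝ≥0∞) +
        lam R * ((wallDist P (C R) z t : ℕ∞) : ℝ≥0∞))) ≤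
      ⨆ p : Qp, ∑ R ∈ F, (lam R * (((p.1.1 R).encard : ℕ∞) : ℝ≥0∞) +
        lam R * (((p.1.2 R).encard : ℕ∞) : ℝ≥0∞)) := by
    intro F
    induction F using Finset.induction_on with
    | empty => simp
    | @insert a F' hx ih =>
      rw [Finset.sum_insert hx]
      refine le_trans (add_le_add_right ih _) ?_
      -- express the `a`-term as suprema over single chains
      set Q1 := {c : Set ↥P // c ∈ C a ∧ ∀ w ∈ c, x w ≠ y w} with hQ1
      set Q2 := {c : Set ↥P // c ∈ C a ∧ ∀ w ∈ c, z w ≠ t w} with hQ2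
      haveI : Nonempty Q1 := ⟨⟨∅, hempty a, by simp⟩⟩
      haveI : Nonempty Q2 := ⟨⟨∅, hempty a, by simp⟩⟩
      have e1 : lam a * ((wallDist P (C a) x y : ℕ∞) : ℝ≥0∞) =
          ⨆ c : Q1, lam a * ((c.1.encard : ℕ∞) : ℝ≥0∞) := by
        rw [wallDist, ← iSup_subtype'', toENNReal_iSup, ENNReal.mul_iSup]
        rfl
      have e2 : lam a * ((wallDist P (C a) z t : ℕ∞) : ℝ≥0∞) =
          ⨆ c : Q2, lam a * ((c.1.encard : ℕ∞) : ℝ≥0∞) := by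
        rw [wallDist, ← iSup_subtype'', toENNReal_iSup, ENNReal.mul_iSup]
        rfl
      rw [e1, e2, iSup_add_iSup_eq', iSup_add_iSup_eq']
      refine iSup_le fun q => ?_
      obtain ⟨⟨c, c'⟩, p⟩ := q
      refine le_iSup_of_le
        ⟨(Function.update p.1.1 a c.1, Function.update p.1.2 a c'.1), ?_, ?_⟩ ?_
      · intro R
        dsimp only
        by_cases hR : R = a
        · subst hR; rw [Function.update_self]; exact c.2
        · rw [Function.update_of_ne hR]; exact p.2.1 R
      · intro R
        dsimp only
        by_cases hR : R = a
        · subst hR; rw [Function.update_self]; exact c'.2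
        · rw [Function.update_of_ne hR]; exact p.2.2 R
      · dsimp only
        rw [Finset.sum_insert hx, Function.update_self, Function.update_self]
        refine add_le_add_right (le_of_eq (Finset.sum_congr rfl fun R hR => ?_)) _
        have hRa : R ≠ a := fun h => hx (h ▸ hR)
        rw [Function.update_of_ne hRa, Function.update_of_ne hRa]
  -- assemble
  rw [gradedDist, gradedDist, ← ENNReal.tsum_add, ENNReal.tsum_eq_iSup_sum]
  refine iSup_le fun F => le_trans (hmain F) (iSup_le fun p => ?_)
  refine le_trans ?_ (hkey p.1.1 p.1.2 p.2.1 p.2.2)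
  refine le_trans (ENNReal.sum_le_tsum F) (le_of_eq (tsum_congr fun R => ?_))
  rw [mul_add]

end Reduce

section Dichotomy

variable {S : Type*} {P : Set (Set (Set S))}

lemma few_dichotomy (hP : IsWallSystem P) (C : ℕ → Set (Set ↥P)) (L : ℕ → ℕ)
    (hmono : ∀ R, C R ⊆ C (R + 1)) (hchain : ∀ R, IsChainSystem P (C R))
    (hsepd : ∀ R, IsSeparated P (C R) (L R)) (hL1 : ∀ R, 1 ≤ L R)
    {x₁ x₂ x₃ x₄ : ↥P → Set S}
    (h1 : IsUltra P x₁) (h2 : IsUltra P x₂) (h3 : IsUltra P x₃) (h4 : IsUltra P x₄) :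
    (∀ R, ∀ d ∈ C R, (∀ w ∈ d, x₁ w = x₄ w ∧ x₂ w = x₃ w ∧ x₁ w ≠ x₂ w) →
        d.encard ≤ (L R : ℕ∞)) ∨
    (∀ R, ∀ d ∈ C R, (∀ w ∈ d, x₁ w = x₃ w ∧ x₂ w = x₄ w ∧ x₁ w ≠ x₂ w) →
        d.encard ≤ (L R : ℕ∞)) := by
  have hmono' : ∀ {i j : ℕ}, i ≤ j → C i ⊆ C j := by
    intro i j h
    induction h with
    | refl => exact subset_rfl
    | step _ ih => exact ih.trans (hmono _)
  by_cases hm : ∀ R, ∀ d ∈ C R, (∀ w ∈ d, x₁ w = x₄ w ∧ x₂ w = x₃ w ∧ x₁ w ≠ x₂ w) →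
      d.encard ≤ (L R : ℕ∞)
  · exact Or.inl hm
  right
  push_neg at hm
  obtain ⟨R₁, d₁, hd₁C, hd₁m, hlt⟩ := hm
  have hone : 1 < d₁.encard :=
    lt_of_le_of_lt (Nat.one_le_cast.2 (hL1 R₁)) hlt
  obtain ⟨a, b, haa, hbb, hab⟩ := Set.one_lt_encard_iff.1 hone
  have hpair₁ : ({a, b} : Set ↥P) ∈ C R₁ := by
    refine (hchain R₁).1.subset_mem d₁ hd₁C _ ?_
    intro w hw
    rcases hw with h | h
    · rw [h]; exact haa
    · rw [Set.mem_singleton_iff] at h; rw [h]; exact hbb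
  intro R d hdC hdp
  by_cases hd1 : d.encard ≤ 1
  · exact hd1.trans (Nat.one_le_cast.2 (hL1 R))
  obtain ⟨a', b', ha', hb', hab'⟩ := Set.one_lt_encard_iff.1 (not_le.1 hd1)
  have hpair' : ({a', b'} : Set ↥P) ∈ C R := by
    refine (hchain R).1.subset_mem d hdC _ ?_
    intro w hw
    rcases hw with h | h
    · rw [h]; exact ha'
    · rw [Set.mem_singleton_iff] at h; rw [h]; exact hb'
  rcases le_total R R₁ with hR | hR
  · exfalso
    refine absurd (hsepd R₁ a' b' hab' (hmono' hR hpair') d₁ hd₁C ?_) (not_le.2 hlt)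
    intro w hw
    exact ⟨(plus_crosses_minus hP h1 h2 h3 h4 (hdp a' ha') (hd₁m w hw)).symm',
      (plus_crosses_minus hP h1 h2 h3 h4 (hdp b' hb') (hd₁m w hw)).symm'⟩
  · refine hsepd R a b hab (hmono' hR hpair₁) d hdC ?_
    intro w hw
    exact ⟨plus_crosses_minus hP h1 h2 h3 h4 (hdp w hw) (hd₁m a haa),
      plus_crosses_minus hP h1 h2 h3 h4 (hdp w hw) (hd₁m b hbb)⟩

end Dichotomy

/-- **Hyperbolicity of graded duals** (Proposition 5.13): the graded dual of a
graded system is four-point hyperbolic with constant `16Λ`. -/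
theorem graded_dual_four_point_hyperbolic
    {S : Type*} (P : Set (Set (Set S)))
    (hP : IsWallSystem P)
    (C : ℕ → Set (Set ↥P)) (L m : ℕ → ℕ) (κ lam : ℕ → ℝ≥0∞)
    (hgraded : IsGradedSystem P C L m κ)
    (hlam_pos : ∀ R, 0 < lam R) (hlam_le : ∀ R, lam R ≤ κ R)
    (Λ : ℝ≥0∞)
    (hΛ : Λ = ∑' R, lam R * ((L R : ℝ≥0∞) + (m R : ℝ≥0∞) + 1))
    (hΛ_fin : Λ ≠ ⊤) :
    ∀ x₁ ∈ gradedSpace P C lam, ∀ x₂ ∈ gradedSpace P C lam,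
    ∀ x₃ ∈ gradedSpace P C lam, ∀ x₄ ∈ gradedSpace P C lam,
      gradedDist P C lam x₁ x₂ + gradedDist P C lam x₃ x₄ ≤
        16 * Λ +
          max (gradedDist P C lam x₁ x₃ + gradedDist P C lam x₂ x₄)
            (gradedDist P C lam x₁ x₄ + gradedDist P C lam x₂ x₃) := by
  intro x₁ hx₁ x₂ hx₂ x₃ hx₃ x₄ hx₄
  have h1 : IsUltra P x₁ := hx₁.1
  have h2 : IsUltra P x₂ := hx₂.1
  have h3 : IsUltra P x₃ := hx₃.1
  have h4 : IsUltra P x₄ := hx₄.1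
  by_cases hne : Nonempty ↥P
  swap
  · -- no walls at all : all distances vanish
    haveI : IsEmpty ↥P := not_nonempty_iff.1 hne
    have hwd : ∀ (x y : ↥P → Set S) (R : ℕ), wallDist P (C R) x y = 0 := by
      intro x y R
      refine le_antisymm ?_ zero_le
      refine iSup₂_le fun c _ => ?_
      rw [Set.eq_empty_of_isEmpty c, Set.encard_empty]
    have hgd : ∀ x y : ↥P → Set S, gradedDist P C lam x y = 0 := by
      intro x y
      rw [gradedDist]
      simp [hwd]
    rw [hgd, hgd]
    simp
  · haveI := hne
    have hempty : ∀ R, (∅ : Set ↥P) ∈ C R := fun R =>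
      (hgraded.chain R).1.subset_mem _
        ((hgraded.chain R).1.singleton_mem (Classical.arbitrary ↥P)) ∅
        (Set.empty_subset _)
    rcases few_dichotomy hP C L hgraded.mono hgraded.chain hgraded.separated
        hgraded.L_pos h1 h2 h3 h4 with hfew | hfew
    · -- pairing (14)(23)
      have hred : gradedDist P C lam x₁ x₂ + gradedDist P C lam x₃ x₄ ≤
          gradedDist P C lam x₁ x₄ + gradedDist P C lam x₂ x₃ +
            16 * ∑' R, lam R * ((L R : ℝ≥0∞) + (m R : ℝ≥0∞) + 1) := by
        refine sum_reduce C lam hempty ?_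
        intro c c' hc hc'
        exact key_bound hP C L m lam hgraded.chain hgraded.separated hgraded.gluable
          h1 h2 h3 h4 hfew c c' hc hc'
      refine hred.trans ?_
      rw [hΛ]
      calc gradedDist P C lam x₁ x₄ + gradedDist P C lam x₂ x₃ +
            16 * ∑' R, lam R * ((L R : ℝ≥0∞) + (m R : ℝ≥0∞) + 1)
          = 16 * (∑' R, lam R * ((L R : ℝ≥0∞) + (m R : ℝ≥0∞) + 1)) +
            (gradedDist P C lam x₁ x₄ + gradedDist P C lam x₂ x₃) := by ring
        _ ≤ _ := add_le_add_right (le_max_right _ _) _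
    · -- pairing (13)(24) : apply the master bound with x₃ and x₄ exchanged
      have hred : gradedDist P C lam x₁ x₂ + gradedDist P C lam x₃ x₄ ≤
          gradedDist P C lam x₁ x₃ + gradedDist P C lam x₂ x₄ +
            16 * ∑' R, lam R * ((L R : ℝ≥0∞) + (m R : ℝ≥0∞) + 1) := by
        refine sum_reduce C lam hempty ?_
        intro c c' hc hc'
        refine key_bound hP C L m lam hgraded.chain hgraded.separated hgraded.gluable
          h1 h2 h4 h3 hfew c c' hc ?_
        intro R
        exact ⟨(hc' R).1, fun w hw => ((hc' R).2 w hw).symm⟩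
      refine hred.trans ?_
      rw [hΛ]
      calc gradedDist P C lam x₁ x₃ + gradedDist P C lam x₂ x₄ +
            16 * ∑' R, lam R * ((L R : ℝ≥0∞) + (m R : ℝ≥0∞) + 1)
          = 16 * (∑' R, lam R * ((L R : ℝ≥0∞) + (m R : ℝ≥0∞) + 1)) +
            (gradedDist P C lam x₁ x₃ + gradedDist P C lam x₂ x₄) := by ring
        _ ≤ _ := add_le_add_right (le_max_left _ _) _

end WallDuality
end
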